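/- arXiv:1709.05314 — 8 statements merged into one kernel-verified Lean document; each statement's English description precedes it below -/
import Mathlib

section
/- If Γ is a string attractor of a string S of length n over an alphabet, then for every k with 1 ≤ k ≤ n, the number of distinct substrings of S of length k is at most |Γ| · k. -/
/-- `Γ` is a string attractor of `S` (0-indexed positions): every nonempty
substring of `S` has an occurrence crossing a position of `Γ`. -/
def IsAttractor {α : Type*} (S : List α) (Γ : Finset ℕ) : Prop :=
  (∀ j ∈ Γ, j < S.length) ∧
  ∀ i l : ℕ, i + l ≤ S.length → l ≠ 0 →
    ∃ i', i' + l ≤ S.length ∧ (S.drop i').take l = (S.drop i).take l ∧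
      ∃ j ∈ Γ, i' ≤ j ∧ j < i' + l

/-- The number of distinct `k`-mers of `S` is at most `|Γ| · k`. -/
theorem stmt0 {α : Type*} [DecidableEq α] (S : List α) (Γ : Finset ℕ)
    (h : IsAttractor S Γ) (k : ℕ) (hk : 1 ≤ k) (hk' : k ≤ S.length) :
    ((Finset.range (S.length + 1 - k)).image (fun i => (S.drop i).take k)).card
      ≤ Γ.card * k := by
  classical
  set T := (Finset.range (S.length + 1 - k)).image (fun i => (S.drop i).take k) with hT
  have key : ∀ w : List α, ∃ p : ℕ × ℕ, w ∈ T →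
      p.1 ∈ Γ ∧ p.2 < k ∧ p.2 ≤ p.1 ∧ (S.drop (p.1 - p.2)).take k = w := by
    intro w
    by_cases hw : w ∈ T
    · simp only [hT, Finset.mem_image, Finset.mem_range] at hw
      obtain ⟨i, hi, rfl⟩ := hw
      obtain ⟨i', hi'k, heq, j, hj, hij1, hij2⟩ := h.2 i k (by omega) (by omega)
      refine ⟨(j, j - i'), fun _ => ⟨hj, by omega, by omega, ?_⟩⟩
      rw [show j - (j - i') = i' from by omega]; exact heq
    · exact ⟨(0, 0), fun hw' => absurd hw' hw⟩
  choose f hf using key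
  calc T.card ≤ (Γ ×ˢ Finset.range k).card := by
        apply Finset.card_le_card_of_injOn f
        · intro w hw
          obtain ⟨h1, h2, _, _⟩ := hf w hw
          simp [Finset.mem_product, h1, h2]
        · intro w1 h1 w2 h2 hfe
          obtain ⟨_, _, _, e1⟩ := hf w1 h1
          obtain ⟨_, _, _, e2⟩ := hf w2 h2
          rw [← e1, ← e2, hfe]
      _ = Γ.card * k := by simp [Finset.card_product]
end

section
/- If Γ is a string attractor of a string S of length n over an alphabet of size σ, then the number of distinct nonempty substrings of S is at most ∑_{k=1}^{n} min{σ^k, n−k+1, |Γ|·k}. -/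
/-- The number of distinct nonempty substrings of `S` is at most
`∑_{k=1}^{n} min (σ^k) (min (n-k+1) (γ·k))`. -/
theorem stmt1 {α : Type*} [Fintype α] [DecidableEq α] (S : List α) (Γ : Finset ℕ)
    (h : IsAttractor S Γ) :
    (Finset.image (fun p : ℕ × ℕ => (S.drop p.1).take p.2)
      ((Finset.range S.length) ×ˢ (Finset.Icc 1 S.length))).card
    ≤ ∑ k ∈ Finset.Icc 1 S.length,
        min (Fintype.card α ^ k) (min (S.length - k + 1) (Γ.card * k)) := by
  classical
  set D : ℕ → Finset (List α) := fun k =>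
    Finset.image (fun i => (S.drop i).take k)
      ((Finset.range S.length).filter (fun i => i + k ≤ S.length)) with hD
  have hsub : (Finset.image (fun p : ℕ × ℕ => (S.drop p.1).take p.2)
      ((Finset.range S.length) ×ˢ (Finset.Icc 1 S.length)))
      ⊆ (Finset.Icc 1 S.length).biUnion D := by
    intro T hT
    simp only [Finset.mem_image, Finset.mem_product, Finset.mem_range,
      Finset.mem_Icc] at hT
    obtain ⟨⟨i, l⟩, ⟨hi, hl1, hl2⟩, rfl⟩ := hT
    set k := ((S.drop i).take l).length with hk
    have hklen : k = min l (S.length - i) := by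
      simp [hk, List.length_take, List.length_drop]
    have hk1 : 1 ≤ k := by rw [hklen]; omega
    have hkn : i + k ≤ S.length := by rw [hklen]; omega
    have hkl : k ≤ l := by rw [hklen]; omega
    have heq : (S.drop i).take l = (S.drop i).take k := by
      have h1 : ((S.drop i).take l).take k = (S.drop i).take (min k l) :=
        List.take_take
      rw [min_eq_left hkl] at h1
      rw [← h1, hk, List.take_length]
    rw [Finset.mem_biUnion]
    refine ⟨k, Finset.mem_Icc.2 ⟨hk1, le_trans hkl hl2⟩, ?_⟩
    simp only [hD, Finset.mem_image, Finset.mem_filter, Finset.mem_range]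
    exact ⟨i, ⟨hi, hkn⟩, heq.symm⟩
  refine le_trans (Finset.card_le_card hsub) ?_
  refine le_trans Finset.card_biUnion_le ?_
  apply Finset.sum_le_sum
  intro k hk
  rw [Finset.mem_Icc] at hk
  have hlen : ∀ T ∈ D k, T.length = k := by
    intro T hT
    simp only [hD, Finset.mem_image, Finset.mem_filter, Finset.mem_range] at hT
    obtain ⟨i, ⟨hi, hik⟩, rfl⟩ := hT
    simp only [List.length_take, List.length_drop]
    omega
  have b1 : (D k).card ≤ Fintype.card α ^ k := by
    calc (D k).card
        ≤ (Finset.image (fun f : Fin k → α => List.ofFn f) Finset.univ).card := by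
          apply Finset.card_le_card
          intro T hT
          have hTl := hlen T hT
          simp only [Finset.mem_image, Finset.mem_univ, true_and]
          refine ⟨fun j => T.get (Fin.cast hTl.symm j), ?_⟩
          apply List.ext_get
          · simp [hTl]
          · intro m h1 h2
            simp [List.get_ofFn]
      _ ≤ Finset.univ.card := Finset.card_image_le
      _ = Fintype.card α ^ k := by simp [Fintype.card_fun]
  have b2 : (D k).card ≤ S.length - k + 1 := by
    refine le_trans Finset.card_image_le ?_
    have : (Finset.range S.length).filter (fun i => i + k ≤ S.length)
        ⊆ Finset.range (S.length - k + 1) := by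
      intro i hi
      simp only [Finset.mem_filter, Finset.mem_range] at hi ⊢
      omega
    simpa using Finset.card_le_card this
  have b3 : (D k).card ≤ Γ.card * k := by
    have hsub3 : D k ⊆ Finset.image (fun p : ℕ × ℕ => (S.drop (p.1 - p.2)).take k)
        (Γ ×ˢ Finset.range k) := by
      intro T hT
      simp only [hD, Finset.mem_image, Finset.mem_filter, Finset.mem_range] at hT
      obtain ⟨i, ⟨hi, hik⟩, rfl⟩ := hT
      obtain ⟨i', hi'k, heq, j, hj, hji1, hji2⟩ := h.2 i k hik (by omega)
      simp only [Finset.mem_image, Finset.mem_product, Finset.mem_range]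
      refine ⟨(j, j - i'), ⟨hj, by omega⟩, ?_⟩
      have hji : j - (j - i') = i' := by omega
      simp only [hji]
      exact heq
    refine le_trans (Finset.card_le_card hsub3) ?_
    refine le_trans Finset.card_image_le ?_
    simp [Finset.card_product]
  exact le_min b1 (le_min b2 b3)
end

section
/- Let S be a string of length n with a string attractor of size γ, and let ℓ_max denote the length of the longest substring of S that occurs at least twice in S (ℓ_max = 0 if no substring is repeated). Then ℓ_max ≥ (n − γ)/(γ + 1). -/
/-- If `lmax` bounds the length of every repeated substring of `S`
(in particular if it is the length of the longest repeated substring,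
with `lmax = 0` when no substring is repeated), and `S` has a string
attractor of size `γ`, then `lmax ≥ (n − γ)/(γ + 1)`. -/
theorem stmt2 {α : Type*} (S : List α) (Γ : Finset ℕ) (h : IsAttractor S Γ)
    (lmax : ℕ)
    (hmax : ∀ l i i', i ≠ i' → l ≠ 0 → i + l ≤ S.length → i' + l ≤ S.length →
      (S.drop i).take l = (S.drop i').take l → l ≤ lmax) :
    ((S.length : ℝ) - Γ.card) / (Γ.card + 1) ≤ lmax := by
  obtain ⟨hΓ, hatt⟩ := h
  set n := S.length with hn
  
  rw [div_le_iff₀ (by positivity)]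
  suffices hkey : n ≤ (Γ.card + 1) * lmax + Γ.card by
    have h1 : (n : ℝ) ≤ (Γ.card + 1) * lmax + Γ.card := by exact_mod_cast hkey
    nlinarith
  by_cases hc : n ≤ lmax
  · nlinarith
  have key : ∀ i, i + (lmax + 1) ≤ n → ∃ j ∈ Γ, i ≤ j ∧ j < i + (lmax + 1) := by
    intro i hi
    obtain ⟨i', hi', heq, j, hj, hj1, hj2⟩ := hatt i (lmax + 1) hi (by omega)
    rcases eq_or_ne i' i with rfl | hne
    · exact ⟨j, hj, hj1, hj2⟩
    · have := hmax (lmax + 1) i i' (Ne.symm hne) (by omega) hi hi' heq.symm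
      omega
  have hsub : Finset.range (n - lmax) ⊆
      Γ.biUnion (fun j => Finset.Icc (j - lmax) j) := by
    intro i hi
    simp only [Finset.mem_range] at hi
    obtain ⟨j, hj, h1, h2⟩ := key i (by omega)
    simp only [Finset.mem_biUnion, Finset.mem_Icc]
    exact ⟨j, hj, by omega, h1⟩
  have hcard := (Finset.card_le_card hsub).trans Finset.card_biUnion_le
  have hsum : ∑ j ∈ Γ, (Finset.Icc (j - lmax) j).card ≤ Γ.card * (lmax + 1) := by
    calc ∑ j ∈ Γ, (Finset.Icc (j - lmax) j).card ≤ ∑ _j ∈ Γ, (lmax + 1) := by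
          apply Finset.sum_le_sum; intro j _; rw [Nat.card_Icc]; omega
      _ = Γ.card * (lmax + 1) := by rw [Finset.sum_const, smul_eq_mul]
  rw [Finset.card_range] at hcard
  have h2 := hcard.trans hsum
  calc n = (n - lmax) + lmax := (Nat.sub_add_cancel (by omega)).symm
    _ ≤ Γ.card * (lmax + 1) + lmax := Nat.add_le_add_right h2 _
    _ = (Γ.card + 1) * lmax + Γ.card := by ring
end

section
/- Let MS be a macro scheme of T with b₁ copy directives T[iₖ..jₖ] ← T[i'ₖ..j'ₖ] and b₂ character directives T[qₖ] ← cₖ. Then the set Γ consisting of all left endpoints iₖ and right endpoints jₖ of copy-directive targets together with all positions qₖ of character directives is a string attractor of T of size at most 2b₁ + b₂ ≤ 2(b₁+b₂). -/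
/-- Position `p` can be reconstructed from a macro scheme: following copy
directives (each step: a copy directive whose target interval `[tl k, tr k]`
contains the current position, shifting by the directive's offset to
`src k + (p - tl k)`) finitely many times reaches a position covered by a
character directive `q`. -/
inductive MSReach {b₁ b₂ : ℕ} (tl tr src : Fin b₁ → ℕ) (q : Fin b₂ → ℕ) : ℕ → Prop
  | base (p : ℕ) (k : Fin b₂) (h : q k = p) : MSReach tl tr src q p
  | step (p : ℕ) (k : Fin b₁) (h1 : tl k ≤ p) (h2 : p ≤ tr k)
      (h : MSReach tl tr src q (src k + (p - tl k))) : MSReach tl tr src q p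

/-- Slicing a common sub-slice out of two equal slices. -/
lemma slice_eq {α : Type*} (S : List α) (a b o l m : ℕ)
    (h : (S.drop a).take m = (S.drop b).take m) (hol : o + l ≤ m) :
    (S.drop (a + o)).take l = (S.drop (b + o)).take l := by
  have key : ∀ c : ℕ, (((S.drop c).take m).drop o).take l = (S.drop (c + o)).take l := by
    intro c
    rw [List.drop_take, List.drop_drop, List.take_take, Nat.min_eq_left (by omega)]
  have := congrArg (fun L => (L.drop o).take l) h
  simpa only [key] using this

/-- A macro scheme with `b₁` copy directives `T[tl k .. tr k] ← T[src k ..]`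
and `b₂` character directives `T[q k] ← c k` induces the string attractor
consisting of all endpoints `tl k`, `tr k` and all positions `q k`, of size
at most `2b₁ + b₂`. -/
theorem stmt9 {α : Type*} (S : List α) (b₁ b₂ : ℕ)
    (tl tr src : Fin b₁ → ℕ) (q : Fin b₂ → ℕ) (c : Fin b₂ → α)
    (hle : ∀ k, tl k ≤ tr k) (hb : ∀ k, tr k < S.length)
    (hsb : ∀ k, src k + (tr k - tl k) < S.length)
    (hcopy : ∀ k, (S.drop (src k)).take (tr k - tl k + 1)
              = (S.drop (tl k)).take (tr k - tl k + 1))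
    (hqb : ∀ k, q k < S.length)
    (hc : ∀ k, S[q k]? = some (c k))
    (hrec : ∀ p < S.length, MSReach tl tr src q p) :
    IsAttractor S ((Finset.univ.image tl ∪ Finset.univ.image tr) ∪ Finset.univ.image q) ∧
    ((Finset.univ.image tl ∪ Finset.univ.image tr) ∪ Finset.univ.image q).card
      ≤ 2 * b₁ + b₂ := by
  set Γ : Finset ℕ := (Finset.univ.image tl ∪ Finset.univ.image tr) ∪ Finset.univ.image q
    with hΓ
  have htlΓ : ∀ k, tl k ∈ Γ := fun k => by
    simp [hΓ, Finset.mem_union, Finset.mem_image]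
  have htrΓ : ∀ k, tr k ∈ Γ := fun k => by
    simp [hΓ, Finset.mem_union, Finset.mem_image]
  have hqΓ : ∀ k, q k ∈ Γ := fun k => by
    simp [hΓ, Finset.mem_union, Finset.mem_image]
  constructor
  · constructor
    · intro j hj
      simp only [hΓ, Finset.mem_union, Finset.mem_image, Finset.mem_univ, true_and] at hj
      rcases hj with (⟨k, rfl⟩ | ⟨k, rfl⟩) | ⟨k, rfl⟩
      · exact lt_of_le_of_lt (hle k) (hb k)
      · exact hb k
      · exact hqb k
    · intro i l hil hl
      have hmain : ∀ p, MSReach tl tr src q p → ∀ l : ℕ, l ≠ 0 → p + l ≤ S.length →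
          ∃ i', i' + l ≤ S.length ∧ (S.drop i').take l = (S.drop p).take l ∧
            ∃ j ∈ Γ, i' ≤ j ∧ j < i' + l := by
        intro p hp
        induction hp with
        | base p k hk =>
          intro l hl hpl
          exact ⟨p, hpl, rfl, q k, hqΓ k, by omega, by omega⟩
        | step p k h1 h2 h ih =>
          intro l hl hpl
          by_cases htr : p + l ≤ tr k + 1
          · obtain ⟨i', hi1, hi2, hj⟩ := ih l hl (by have := hsb k; omega)
            refine ⟨i', hi1, hi2.trans ?_, hj⟩
            have : src k + (p - tl k) = src k + (p - tl k) := rfl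
            have heq := slice_eq S (src k) (tl k) (p - tl k) l (tr k - tl k + 1)
              (hcopy k) (by omega)
            rw [heq]
            have hpe : tl k + (p - tl k) = p := by omega
            rw [hpe]
          · exact ⟨p, hpl, rfl, tr k, htrΓ k, h2, by omega⟩
      exact hmain i (hrec i (by omega)) l hl hil
  · calc Γ.card ≤ (Finset.univ.image tl ∪ Finset.univ.image tr).card
        + (Finset.univ.image q).card := Finset.card_union_le _ _
    _ ≤ ((Finset.univ.image tl).card + (Finset.univ.image tr).card)
        + (Finset.univ.image q).card := by
        exact Nat.add_le_add_right (Finset.card_union_le _ _) _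
    _ ≤ (b₁ + b₁) + b₂ := by
        have h1 := Finset.card_image_le (s := (Finset.univ : Finset (Fin b₁))) (f := tl)
        have h2 := Finset.card_image_le (s := (Finset.univ : Finset (Fin b₁))) (f := tr)
        have h3 := Finset.card_image_le (s := (Finset.univ : Finset (Fin b₂))) (f := q)
        simp only [Finset.card_univ, Fintype.card_fin] at h1 h2 h3
        omega
    _ ≤ 2 * b₁ + b₂ := by omega
end

section
/- Let T be factorized by the Lempel-Ziv (LZ77) factorization into z phrases, where each phrase is either a single character not occurring before, or the longest prefix of the remaining suffix that occurs starting at an earlier position in T without overlapping the current phrase. Then the set of positions at the ends of the z phrases is a string attractor of T of size at most z. -/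
lemma lz_take_sub {α : Type*} (S : List α) (p q n d m : ℕ)
    (h : (S.drop p).take n = (S.drop q).take n) (hdm : d + m ≤ n) :
    (S.drop (p+d)).take m = (S.drop (q+d)).take m := by
  have h2 := congrArg (fun t : List α => (t.drop d).take m) h
  simp only [List.drop_take, List.drop_drop, List.take_take] at h2
  rwa [Nat.min_eq_left (by omega : m ≤ n - d)] at h2

lemma lz_loc (l : ℕ → ℕ) : ∀ z i, i < ∑ j ∈ Finset.range z, l j →
    ∃ k < z, (∑ j ∈ Finset.range k, l j) ≤ i ∧ i < ∑ j ∈ Finset.range (k+1), l j := by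
  intro z
  induction z with
  | zero => simp
  | succ n ih =>
    intro i hi
    by_cases h : i < ∑ j ∈ Finset.range n, l j
    · obtain ⟨k, hk, h1, h2⟩ := ih i h
      exact ⟨k, Nat.lt_succ_of_lt hk, h1, h2⟩
    · exact ⟨n, Nat.lt_succ_self n, le_of_not_gt h, hi⟩

lemma lz_main {α : Type*} (S : List α) (z : ℕ) (l : ℕ → ℕ)
    (hpos : ∀ i < z, 1 ≤ l i)
    (htot : ∑ j ∈ Finset.range z, l j = S.length)
    (hph : ∀ i < z,
      (l i = 1) ∨
      (∃ p, p + l i ≤ ∑ j ∈ Finset.range i, l j ∧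
            (S.drop p).take (l i) = (S.drop (∑ j ∈ Finset.range i, l j)).take (l i))) :
    ∀ i len, i + len ≤ S.length → len ≠ 0 →
    ∃ i', i' + len ≤ S.length ∧ (S.drop i').take len = (S.drop i).take len ∧
      ∃ k < z, i' ≤ (∑ j ∈ Finset.range (k+1), l j) - 1 ∧
        (∑ j ∈ Finset.range (k+1), l j) - 1 < i' + len := by
  intro i
  induction i using Nat.strong_induction_on with
  | _ i ih =>
    intro len hlen hne
    have hi : i < ∑ j ∈ Finset.range z, l j := by omega
    obtain ⟨k, hkz, hk1, hk2⟩ := lz_loc l z i hi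
    have hsum : ∑ j ∈ Finset.range (k+1), l j
        = (∑ j ∈ Finset.range k, l j) + l k := Finset.sum_range_succ l k
    have hlk : 1 ≤ l k := hpos k hkz
    by_cases hcross : (∑ j ∈ Finset.range (k+1), l j) - 1 < i + len
    · exact ⟨i, hlen, rfl, k, hkz, by omega, hcross⟩
    · -- occurrence strictly inside phrase k
      have hin : i + len ≤ (∑ j ∈ Finset.range (k+1), l j) - 1 := le_of_not_gt hcross
      rcases hph k hkz with h1 | ⟨p, hp, heq⟩
      · omega
      · set sk := ∑ j ∈ Finset.range k, l j with hsk
        have hd : (i - sk) + len ≤ l k := by omega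
        have heq2 := lz_take_sub S p sk (l k) (i - sk) len heq hd
        rw [(by omega : sk + (i - sk) = i)] at heq2
        have hlt : p + (i - sk) < i := by omega
        obtain ⟨i', h1, h2, h3⟩ := ih (p + (i - sk)) hlt len (by omega) hne
        exact ⟨i', h1, h2.trans heq2, h3⟩

/-- If `S` is factorized into `z` LZ77 phrases (phrase `i` starts at
`∑_{j<i} l j` and has length `l i`, and is either a single character with no
earlier occurrence, or the longest prefix of the remaining suffix that occurs
starting at an earlier position without overlapping the current phrase), then
the set of phrase-end positions is a string attractor of `S` of size at most `z`. -/
theorem stmt10 {α : Type*} [DecidableEq α] (S : List α) (z : ℕ) (l : ℕ → ℕ)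
    (hpos : ∀ i < z, 1 ≤ l i)
    (htot : ∑ j ∈ Finset.range z, l j = S.length)
    (hph : ∀ i < z,
      (l i = 1 ∧ ¬ ∃ p < ∑ j ∈ Finset.range i, l j,
          S[p]? = S[∑ j ∈ Finset.range i, l j]?)
      ∨ ((∃ p, p + l i ≤ ∑ j ∈ Finset.range i, l j ∧
            (S.drop p).take (l i) = (S.drop (∑ j ∈ Finset.range i, l j)).take (l i)) ∧
         ∀ m, l i < m → (∑ j ∈ Finset.range i, l j) + m ≤ S.length →
          ¬ ∃ p, p + m ≤ ∑ j ∈ Finset.range i, l j ∧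
            (S.drop p).take m = (S.drop (∑ j ∈ Finset.range i, l j)).take m)) :
    IsAttractor S ((Finset.range z).image (fun i => (∑ j ∈ Finset.range (i+1), l j) - 1)) ∧
    ((Finset.range z).image (fun i => (∑ j ∈ Finset.range (i+1), l j) - 1)).card ≤ z := by
  have hph' : ∀ i < z, (l i = 1) ∨
      (∃ p, p + l i ≤ ∑ j ∈ Finset.range i, l j ∧
        (S.drop p).take (l i) = (S.drop (∑ j ∈ Finset.range i, l j)).take (l i)) := by
    intro i hi
    rcases hph i hi with ⟨h, _⟩ | ⟨h, _⟩
    · exact Or.inl h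
    · exact Or.inr h
  refine ⟨⟨?_, ?_⟩, ?_⟩
  · intro j hj
    simp only [Finset.mem_image, Finset.mem_range] at hj
    obtain ⟨k, hk, rfl⟩ := hj
    have h1 : ∑ j ∈ Finset.range (k+1), l j ≤ ∑ j ∈ Finset.range z, l j :=
      Finset.sum_le_sum_of_subset (Finset.range_subset_range.2 hk)
    have h2 : 1 ≤ l k := hpos k hk
    have h3 : ∑ j ∈ Finset.range (k+1), l j = (∑ j ∈ Finset.range k, l j) + l k :=
      Finset.sum_range_succ l k
    omega
  · intro i len hlen hne
    obtain ⟨i', h1, h2, k, hk, h3, h4⟩ := lz_main S z l hpos htot hph' i len hlen hne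
    exact ⟨i', h1, h2, _, Finset.mem_image.2 ⟨k, Finset.mem_range.2 hk, rfl⟩, h3, h4⟩
  · exact (Finset.card_image_le).trans (by simp)
end

section
/- Let the Burrows-Wheeler transform BWT(T) of a string T have r maximal equal-letter runs. Then the set of text positions i such that the character T[i] appears at the first or last position of its run in BWT(T) (under the standard correspondence between BWT positions and text positions) is a string attractor of T of size at most 2r. -/
/-- The rotation of `S` starting at position `i`. -/
abbrev rot {α : Type*} (S : List α) (i : ℕ) : List α := S.drop i ++ S.take i

/-- Text position corresponding to BWT position `i`: the position in `S` of the
last character of the `i`-th (in sorted order, given by `π`) rotation of `S`. -/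
abbrev tp {α : Type*} (S : List α) (π : Equiv.Perm (Fin S.length)) (i : ℕ) : ℕ :=
  if h : i < S.length then ((π ⟨i, h⟩ : ℕ) + S.length - 1) % S.length else 0

/-- The character at BWT position `i`. -/
abbrev bwt {α : Type*} (S : List α) (π : Equiv.Perm (Fin S.length)) (i : ℕ) : Option α :=
  S[tp S π i]?

/-- BWT position `i` is the first position of its maximal equal-letter run. -/
abbrev runFirst {α : Type*} [DecidableEq α] (S : List α)
    (π : Equiv.Perm (Fin S.length)) (i : ℕ) : Prop :=
  i = 0 ∨ bwt S π i ≠ bwt S π (i - 1)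

/-- BWT position `i` is the last position of its maximal equal-letter run. -/
abbrev runLast {α : Type*} [DecidableEq α] (S : List α)
    (π : Equiv.Perm (Fin S.length)) (i : ℕ) : Prop :=
  i = S.length - 1 ∨ bwt S π i ≠ bwt S π (i + 1)

lemma lex_sandwich {α : Type*} [LinearOrder α] :
    ∀ (V A B C : List α), (List.Lex (· < ·) A B ∨ A = B) → (List.Lex (· < ·) B C ∨ B = C) →
      V <+: A → V <+: C → V <+: B := by
  intro V
  induction V with
  | nil => intro A B C _ _ _ _; exact List.nil_prefix
  | cons v V ih =>
    rintro A B C hAB hBC ⟨A2, rfl⟩ ⟨C2, hC⟩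
    rcases hAB with hAB | rfl
    swap
    · exact List.prefix_append _ _
    rcases hBC with hBC | rfl
    swap
    · exact hC ▸ List.prefix_append _ _
    subst hC
    rw [List.cons_append] at hAB hBC
    cases hAB with
    | cons h =>
      rename_i B2
      cases hBC with
      | cons h2 =>
        have : V <+: B2 :=
          ih (V ++ A2) B2 (V ++ C2) (Or.inl h) (Or.inl h2)
            (List.prefix_append _ _) (List.prefix_append _ _)
        exact List.cons_prefix_cons.mpr ⟨rfl, this⟩
      | rel h2 => exact absurd h2 (lt_irrefl _)
    | rel h =>
      rename_i b B2
      cases hBC with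
      | cons h2 => exact absurd h (lt_irrefl _)
      | rel h2 => exact absurd (h.trans h2) (lt_irrefl _)

lemma exists_runFirst' {β : Type*} (g : ℕ → β) :
    ∀ j : ℕ, ∃ j0 ≤ j, (j0 = 0 ∨ g j0 ≠ g (j0 - 1)) ∧ g j0 = g j := by
  intro j
  induction j using Nat.strong_induction_on with
  | _ j ih =>
    by_cases h : j = 0 ∨ g j ≠ g (j - 1)
    · exact ⟨j, le_refl _, h, rfl⟩
    · push_neg at h
      obtain ⟨hj, hg⟩ := h
      obtain ⟨j0, h1, h2, h3⟩ := ih (j - 1) (by omega)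
      exact ⟨j0, by omega, h2, h3.trans hg.symm⟩

/-- If the BWT of `S` (whose rotations, sorted lexicographically by the
permutation `π`, end with a unique smallest sentinel character) has `r` maximal
equal-letter runs, then the text positions of the characters that are first or
last in their BWT run form a string attractor of `S` of size at most `2r`. -/
theorem stmt11 {α : Type*} [LinearOrder α] (S : List α) (hne : S ≠ [])
    (π : Equiv.Perm (Fin S.length))
    (hsort : ∀ i j : Fin S.length, i < j →
      List.Lex (· < ·) (rot S (π i)) (rot S (π j)) ∨ rot S (π i) = rot S (π j))
    (hsent : ∀ i, i < S.length - 1 → ∀ a, S[i]? = some a → S.getLast hne < a)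
    (r : ℕ)
    (hr : r = ((Finset.range S.length).filter (fun i => runFirst S π i)).card) :
    IsAttractor S (((Finset.range S.length).filter
        (fun i => runFirst S π i ∨ runLast S π i)).image (tp S π)) ∧
    (((Finset.range S.length).filter
        (fun i => runFirst S π i ∨ runLast S π i)).image (tp S π)).card ≤ 2 * r := by
  have hn : 0 < S.length := List.length_pos_iff.mpr hne
  set Γ : Finset ℕ := ((Finset.range S.length).filter
      (fun i => runFirst S π i ∨ runLast S π i)).image (tp S π) with hΓ
  -- basic facts
  have htp_lt : ∀ i, tp S π i < S.length := by
    intro i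
    unfold tp
    split
    · exact Nat.mod_lt _ hn
    · exact hn
  have htp_val : ∀ (i : ℕ) (h : i < S.length),
      tp S π i = ((π ⟨i, h⟩ : ℕ) + S.length - 1) % S.length := fun i h => dif_pos h
  have htp_succ : ∀ (i : ℕ) (h : i < S.length), 0 < (π ⟨i, h⟩ : ℕ) →
      tp S π i = (π ⟨i, h⟩ : ℕ) - 1 := by
    intro i h hq
    rw [htp_val i h]
    have h1 : (π ⟨i, h⟩ : ℕ) + S.length - 1 = ((π ⟨i, h⟩ : ℕ) - 1) + S.length := by omega
    rw [h1, Nat.add_mod_right]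
    exact Nat.mod_eq_of_lt (by have := (π ⟨i, h⟩).isLt; omega)
  have htp_zero : ∀ (i : ℕ) (h : i < S.length), (π ⟨i, h⟩ : ℕ) = 0 →
      tp S π i = S.length - 1 := by
    intro i h hq
    rw [htp_val i h, hq]
    simp [Nat.mod_eq_of_lt (show S.length - 1 < S.length by omega)]
  have hbwt : ∀ (i : ℕ), i < S.length → bwt S π i = some (S[tp S π i]'(htp_lt i)) := by
    intro i _
    exact List.getElem?_eq_getElem (htp_lt i)
  have hlast : S.getLast hne = S[S.length - 1]'(by omega) := List.getLast_eq_getElem hne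
  have hsent' : ∀ (i : ℕ) (h : i < S.length - 1),
      S[S.length - 1]'(by omega) < S[i]'(by omega) := by
    intro i h
    rw [← hlast]
    exact hsent i h _ (List.getElem?_eq_getElem (by omega))
  have hrot_take : ∀ q ℓ : ℕ, q + ℓ ≤ S.length → (rot S q).take ℓ = (S.drop q).take ℓ := by
    intro q ℓ h
    exact List.take_append_of_le_length (by simp; omega)
  have hmemΓ : ∀ (i : ℕ), i < S.length → (runFirst S π i ∨ runLast S π i) →
      tp S π i ∈ Γ := by
    intro i hi hrl
    rw [hΓ]
    exact Finset.mem_image.mpr ⟨i, Finset.mem_filter.mpr ⟨Finset.mem_range.mpr hi, hrl⟩, rfl⟩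
  have hconsdec : ∀ (m ℓ : ℕ) (h : m < S.length),
      (S.drop m).take (ℓ + 1) = S[m] :: (S.drop (m + 1)).take ℓ := by
    intro m ℓ h
    rw [List.drop_eq_getElem_cons h, List.take_succ_cons]
  have hsortle : ∀ (i j : ℕ) (hi : i < S.length) (hj : j < S.length), i ≤ j →
      List.Lex (· < ·) (rot S (π ⟨i, hi⟩)) (rot S (π ⟨j, hj⟩)) ∨
        rot S (π ⟨i, hi⟩) = rot S (π ⟨j, hj⟩) := by
    intro i j hi hj hij
    rcases eq_or_lt_of_le hij with rfl | hlt
    · exact Or.inr rfl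
    · exact hsort ⟨i, hi⟩ ⟨j, hj⟩ (Fin.mk_lt_mk.mpr hlt)
  -- the main claim
  have main : ∀ ℓ p : ℕ, p + ℓ ≤ S.length → ℓ ≠ 0 → ∃ p', p' + ℓ ≤ S.length ∧
      (S.drop p').take ℓ = (S.drop p).take ℓ ∧ ∃ j ∈ Γ, p' ≤ j ∧ j < p' + ℓ := by
    intro ℓ
    induction ℓ with
    | zero => intro p _ h; exact absurd rfl h
    | succ ℓ ih =>
      intro p hpl _
      have hp : p < S.length := by omega
      rcases Nat.eq_zero_or_pos ℓ with rfl | hℓ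
      · -- base case: single character
        set j : Fin S.length := π.symm ⟨(p + 1) % S.length, Nat.mod_lt _ hn⟩ with hjdef
        have hπj : (π ⟨(j : ℕ), j.isLt⟩ : ℕ) = (p + 1) % S.length := by
          rw [hjdef]
          simp
        have htpj : tp S π (j : ℕ) = p := by
          rw [htp_val _ j.isLt, hπj]
          rcases Nat.lt_or_ge (p + 1) S.length with h | h
          · rw [Nat.mod_eq_of_lt h]
            have : p + 1 + S.length - 1 = p + S.length := by omega
            rw [this, Nat.add_mod_right]
            exact Nat.mod_eq_of_lt hp
          · have hpn : p + 1 = S.length := by omega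
            rw [hpn, Nat.mod_self]
            simp [Nat.mod_eq_of_lt (show S.length - 1 < S.length by omega)]
            omega
        obtain ⟨j0, hj0le, hj0rf, hj0eq⟩ := exists_runFirst' (bwt S π) (j : ℕ)
        have hj0lt : j0 < S.length := lt_of_le_of_lt hj0le j.isLt
        have hbj0 : bwt S π j0 = some (S[p]'hp) := by
          rw [hj0eq, hbwt _ j.isLt]
          simp only [htpj]
        have hbj0' : S[tp S π j0]'(htp_lt j0) = S[p]'hp := by
          have := (hbwt j0 hj0lt).symm.trans hbj0
          exact Option.some.inj this
        refine ⟨tp S π j0, by have := htp_lt j0; omega, ?_, tp S π j0,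
          hmemΓ j0 hj0lt (Or.inl hj0rf), le_refl _, by omega⟩
        rw [hconsdec _ 0 (htp_lt j0), hconsdec _ 0 hp]
        simp [hbj0']
      · -- inductive step
        have hp1l : p + 1 + ℓ ≤ S.length := by omega
        have hpn1 : p < S.length - 1 := by omega
        set c : α := S[p]'hp with hcdef
        set V : List α := (S.drop (p+1)).take ℓ with hVdef
        have hVlen : V.length = ℓ := by rw [hVdef]; simp; omega
        have hsentc : S[S.length - 1]'(by omega) < c := hsent' p hpn1
        -- no rotation matching V wraps around
        have hnw : ∀ (i : ℕ) (h : i < S.length),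
            (rot S ((π ⟨i, h⟩ : ℕ))).take ℓ = V → (π ⟨i, h⟩ : ℕ) + ℓ ≤ S.length := by
          intro i h hRt
          by_contra hw
          push_neg at hw
          have hq : (π ⟨i, h⟩ : ℕ) < S.length := (π ⟨i, h⟩).isLt
          set q := (π ⟨i, h⟩ : ℕ) with hqdef
          set m := S.length - 1 - q with hmdef
          have hm2 : m ≤ ℓ - 2 := by omega
          have hmq : m < S.length - q := by omega
          have e1 : V[m]? = S[S.length - 1]? := by
            rw [← hRt]
            simp only [rot]
            rw [List.getElem?_take, if_pos (by omega), List.getElem?_append,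
              if_pos (by simp; omega), List.getElem?_drop]
            congr 1
            omega
          have e2 : V[m]? = S[p + 1 + m]? := by
            rw [hVdef]
            rw [List.getElem?_take, if_pos (by omega), List.getElem?_drop]
          rw [e2] at e1
          rw [List.getElem?_eq_getElem (show p+1+m < S.length by omega),
            List.getElem?_eq_getElem (show S.length - 1 < S.length by omega)] at e1
          have e3 := Option.some.inj e1
          have := hsent' (p+1+m) (by omega)
          rw [← e3] at this
          exact lt_irrefl _ this
        -- interval property
        have hR_int : ∀ (i j k : ℕ) (hi : i < S.length) (hj : j < S.length)
            (hk : k < S.length), i ≤ j → j ≤ k →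
            (rot S ((π ⟨i, hi⟩ : ℕ))).take ℓ = V →
            (rot S ((π ⟨k, hk⟩ : ℕ))).take ℓ = V →
            (rot S ((π ⟨j, hj⟩ : ℕ))).take ℓ = V := by
          intro i j k hi hj hk hij hjk hti htk
          have hVA : V <+: rot S ((π ⟨i, hi⟩ : ℕ)) := hti ▸ List.take_prefix ℓ _
          have hVC : V <+: rot S ((π ⟨k, hk⟩ : ℕ)) := htk ▸ List.take_prefix ℓ _
          have hVB := lex_sandwich V _ _ _ (hsortle i j hi hj hij) (hsortle j k hj hk hjk) hVA hVC
          rw [List.prefix_iff_eq_take, hVlen] at hVB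
          exact hVB.symm
        -- the canonical occurrence
        set i₀ : ℕ := (π.symm ⟨p + 1, by omega⟩ : ℕ) with hi₀def
        have hi₀lt : i₀ < S.length := (π.symm _).isLt
        have hπi₀ : (π ⟨i₀, hi₀lt⟩ : ℕ) = p + 1 := by
          have e : (⟨i₀, hi₀lt⟩ : Fin S.length) = π.symm ⟨p + 1, by omega⟩ := Fin.ext hi₀def
          rw [e, Equiv.apply_symm_apply]
        have hRi₀ : (rot S ((π ⟨i₀, hi₀lt⟩ : ℕ))).take ℓ = V := by
          rw [hπi₀, hrot_take _ ℓ hp1l]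
        have htpi₀ : tp S π i₀ = p := by
          rw [htp_succ _ hi₀lt (by rw [hπi₀]; omega), hπi₀]
          omega
        have hbi₀ : bwt S π i₀ = some c := by
          rw [hbwt _ hi₀lt, hcdef]
          simp only [htpi₀]
        -- sentinel can't start a matching rotation
        have hkey : ∀ (i : ℕ) (h : i < S.length), bwt S π i = some c →
            (π ⟨i, h⟩ : ℕ) ≠ 0 := by
          intro i h hbc h0
          have ht := htp_zero i h h0
          rw [hbwt _ h] at hbc
          have e : S[tp S π i]'(htp_lt i) = c := Option.some.inj hbc
          simp only [ht] at e
          rw [e] at hsentc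
          exact lt_irrefl _ hsentc
        by_cases hcase : ∃ i, ∃ h : i < S.length, (rot S ((π ⟨i, h⟩ : ℕ))).take ℓ = V ∧
            bwt S π i = some c ∧ (runFirst S π i ∨ runLast S π i)
        · obtain ⟨i, h, hRt, hbc, hrl⟩ := hcase
          have hq0 : (π ⟨i, h⟩ : ℕ) ≠ 0 := hkey i h hbc
          have hqℓ : (π ⟨i, h⟩ : ℕ) + ℓ ≤ S.length := hnw i h hRt
          have htpi : tp S π i = (π ⟨i, h⟩ : ℕ) - 1 := htp_succ i h (by omega)
          have hqlt : (π ⟨i, h⟩ : ℕ) < S.length := (π ⟨i, h⟩).isLt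
          refine ⟨(π ⟨i, h⟩ : ℕ) - 1, by omega, ?_, tp S π i, hmemΓ i h hrl,
            by omega, by omega⟩
          rw [hconsdec _ ℓ (show (π ⟨i, h⟩ : ℕ) - 1 < S.length by omega), hconsdec p ℓ hp]
          have e : S[tp S π i]'(htp_lt i) = c := Option.some.inj ((hbwt i h).symm.trans hbc)
          simp only [htpi] at e
          rw [hcdef] at e
          have etail : List.take ℓ (List.drop ((π ⟨i, h⟩ : ℕ) - 1 + 1) S)
              = List.take ℓ (List.drop (p + 1) S) := by
            rw [show (π ⟨i, h⟩ : ℕ) - 1 + 1 = (π ⟨i, h⟩ : ℕ) by omega,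
              ← hrot_take _ ℓ hqℓ, hRt, hVdef]
          rw [e, etail]
        · push_neg at hcase
          -- every position in the interval is interior to its run
          have hnr : ∀ (i : ℕ) (h : i < S.length), (rot S ((π ⟨i, h⟩ : ℕ))).take ℓ = V →
              bwt S π i = some c →
              (i ≠ 0 ∧ bwt S π (i - 1) = some c) ∧
              (i ≠ S.length - 1 ∧ bwt S π (i + 1) = some c) := by
            intro i h hRt hbc
            have hno := hcase i h hRt hbc
            obtain ⟨h1, h2⟩ := hno
            have h1' : ¬(i = 0 ∨ bwt S π i ≠ bwt S π (i - 1)) := fun x => x.elim h1.1 (fun y => y h1.2)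
            have h2' : ¬(i = S.length - 1 ∨ bwt S π i ≠ bwt S π (i + 1)) := fun x => x.elim h2.1 (fun y => y h2.2)
            push_neg at h1' h2'
            exact ⟨⟨h1'.1, h1'.2.symm.trans hbc⟩, ⟨h2'.1, h2'.2.symm.trans hbc⟩⟩
          -- all rotations matching V are preceded by c
          have hallc : ∀ (j : ℕ) (hj : j < S.length),
              (rot S ((π ⟨j, hj⟩ : ℕ))).take ℓ = V → bwt S π j = some c := by
            intro j hj hRj
            rcases le_or_gt i₀ j with hij | hij
            · have key : ∀ d, i₀ + d ≤ j → bwt S π (i₀ + d) = some c := by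
                intro d
                induction d with
                | zero => intro _; simpa using hbi₀
                | succ d ihd =>
                  intro hd
                  have hkd : i₀ + d < S.length := by omega
                  have hRk : (rot S ((π ⟨i₀ + d, hkd⟩ : ℕ))).take ℓ = V :=
                    hR_int i₀ (i₀ + d) j hi₀lt hkd hj (by omega) (by omega) hRi₀ hRj
                  have hbk := ihd (by omega)
                  have := (hnr (i₀ + d) hkd hRk hbk).2.2
                  rw [show i₀ + (d + 1) = (i₀ + d) + 1 by omega]
                  exact this
              have := key (j - i₀) (by omega)
              rwa [show i₀ + (j - i₀) = j by omega] at this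
            · have key : ∀ d, d ≤ i₀ - j → bwt S π (i₀ - d) = some c := by
                intro d
                induction d with
                | zero => intro _; simpa using hbi₀
                | succ d ihd =>
                  intro hd
                  have hkd : i₀ - d < S.length := by omega
                  have hRk : (rot S ((π ⟨i₀ - d, hkd⟩ : ℕ))).take ℓ = V :=
                    hR_int j (i₀ - d) i₀ hj hkd hi₀lt (by omega) (by omega) hRj hRi₀
                  have hbk := ihd (by omega)
                  have := (hnr (i₀ - d) hkd hRk hbk).1.2
                  rw [show i₀ - (d + 1) = (i₀ - d) - 1 by omega]
                  exact this
              have := key (i₀ - j) (le_refl _)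
              rwa [show i₀ - (i₀ - j) = j by omega] at this
          -- apply the induction hypothesis to V
          obtain ⟨p'', hp''ℓ, heq'', γ, hγΓ, hγ1, hγ2⟩ := ih (p + 1) hp1l (by omega)
          have hp''lt : p'' < S.length := by omega
          set j'' : ℕ := (π.symm ⟨p'', hp''lt⟩ : ℕ) with hj''def
          have hj''lt : j'' < S.length := (π.symm _).isLt
          have hπj'' : (π ⟨j'', hj''lt⟩ : ℕ) = p'' := by
            have e : (⟨j'', hj''lt⟩ : Fin S.length) = π.symm ⟨p'', hp''lt⟩ := Fin.ext hj''def
            rw [e, Equiv.apply_symm_apply]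
          have hRj'' : (rot S ((π ⟨j'', hj''lt⟩ : ℕ))).take ℓ = V := by
            rw [hπj'', hrot_take _ ℓ hp''ℓ, heq'']
          have hbj'' := hallc j'' hj''lt hRj''
          have hp''0 : p'' ≠ 0 := by
            intro h0
            exact hkey j'' hj''lt hbj'' (by rw [hπj'', h0])
          have htpj'' : tp S π j'' = p'' - 1 := by
            rw [htp_succ _ hj''lt (by rw [hπj'']; omega), hπj'']
          have hSp'' : S[p'' - 1]'(by omega) = c := by
            have e := Option.some.inj ((hbwt j'' hj''lt).symm.trans hbj'')
            simp only [htpj''] at e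
            exact e
          refine ⟨p'' - 1, by omega, ?_, γ, hγΓ, by omega, by omega⟩
          rw [hconsdec (p'' - 1) ℓ (by omega), hconsdec p ℓ hp]
          rw [hcdef] at hSp''
          have etail : List.take ℓ (List.drop (p'' - 1 + 1) S)
              = List.take ℓ (List.drop (p + 1) S) := by
            rw [show p'' - 1 + 1 = p'' by omega, heq'']
          rw [hSp'', etail]
  refine ⟨⟨?_, ?_⟩, ?_⟩
  · intro j hj
    rw [hΓ] at hj
    obtain ⟨i, hi, rfl⟩ := Finset.mem_image.mp hj
    exact htp_lt i
  · exact fun i l h1 h2 => main l i h1 h2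
  · -- cardinality
    have h1 : Γ.card ≤ ((Finset.range S.length).filter
        (fun i => runFirst S π i ∨ runLast S π i)).card := Finset.card_image_le
    have hsub : (Finset.range S.length).filter (fun i => runFirst S π i ∨ runLast S π i) ⊆
        ((Finset.range S.length).filter (fun i => runFirst S π i)) ∪
        ((Finset.range S.length).filter (fun i => runLast S π i)) := by
      intro x hx
      simp only [Finset.mem_filter, Finset.mem_union, Finset.mem_range] at *
      tauto
    have h2 := (Finset.card_le_card hsub).trans (Finset.card_union_le _ _)
    have h3 : ((Finset.range S.length).filter (fun i => runLast S π i)).card ≤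
        ((Finset.range S.length).filter (fun i => runFirst S π i)).card := by
      apply Finset.card_le_card_of_injOn (fun i => (i + 1) % S.length)
      · intro x hx
        simp only [Finset.mem_coe, Finset.mem_filter, Finset.mem_range] at hx ⊢
        obtain ⟨hxn, hrl⟩ := hx
        refine ⟨Nat.mod_lt _ hn, ?_⟩
        by_cases hxe : x = S.length - 1
        · have hm : (x + 1) % S.length = 0 := by
            rw [hxe, show S.length - 1 + 1 = S.length by omega, Nat.mod_self]
          rw [hm]
          exact Or.inl rfl
        · have hm : (x + 1) % S.length = x + 1 := Nat.mod_eq_of_lt (by omega)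
          rw [hm]
          rcases hrl with h | h
          · exact absurd h hxe
          · exact Or.inr (by simp only [Nat.add_sub_cancel]; exact h.symm)
      · intro x hx y hy hxy
        simp only [Finset.mem_coe, Finset.mem_filter, Finset.mem_range] at hx hy
        have hx1 : x + 1 ≤ S.length := hx.1
        have hy1 : y + 1 ≤ S.length := hy.1
        simp only at hxy
        rcases eq_or_lt_of_le hx1 with he | hlt <;> rcases eq_or_lt_of_le hy1 with he2 | hlt2
        · omega
        · rw [he, Nat.mod_self, Nat.mod_eq_of_lt hlt2] at hxy; omega
        · rw [he2, Nat.mod_self, Nat.mod_eq_of_lt hlt] at hxy; omega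
        · rw [Nat.mod_eq_of_lt hlt, Nat.mod_eq_of_lt hlt2] at hxy; omega
    omega
end

section
/- Given a string T of length n and a string attractor Γ of size γ for T, there exists a valid bidirectional macro scheme for T of size O(γ log(n/γ)). -/
/-- Position `p` is reconstructible in a bidirectional parse: following copy
pointers from `p` reaches, after finitely many steps, a position inside an
explicitly stored (single-character) phrase. -/
inductive Reach (z : ℕ) (st len : ℕ → ℕ) (isExpl : ℕ → Prop) (src : ℕ → ℕ) : ℕ → Prop
  | expl (p i : ℕ) (h : i < z) (h1 : st i ≤ p) (h2 : p < st i + len i)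
      (he : isExpl i) : Reach z st len isExpl src p
  | copy (p i : ℕ) (h : i < z) (h1 : st i ≤ p) (h2 : p < st i + len i)
      (he : ¬ isExpl i) (hr : Reach z st len isExpl src (src i + (p - st i))) :
      Reach z st len isExpl src p

/-- A valid bidirectional macro scheme (bidirectional parse) of `S` with `z`
phrases: phrase `i` starts at `∑_{j<i} len j` and has length `len i ≥ 1`; the
phrases cover `S`; each phrase is either an explicitly stored single character
or a copy of an equal substring of `S` (its source); and every position is
reconstructible. -/
def IsBidirParse {α : Type*} (S : List α) (z : ℕ) (len : ℕ → ℕ)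
    (isExpl : ℕ → Prop) (src : ℕ → ℕ) : Prop :=
  (∀ i < z, 1 ≤ len i) ∧
  (∑ j ∈ Finset.range z, len j = S.length) ∧
  (∀ i < z, isExpl i → len i = 1) ∧
  (∀ i < z, ¬ isExpl i →
    src i + len i ≤ S.length ∧
    (S.drop (src i)).take (len i)
      = (S.drop (∑ j ∈ Finset.range i, len j)).take (len i)) ∧
  (∀ p < S.length, Reach z (fun i => ∑ j ∈ Finset.range i, len j) len isExpl src p)


namespace Stmt13Aux

def grow (h k : ℕ) : List ℕ :=
  if h = 0 then [] else if h ≤ 2^k then [h] else 2^k :: grow (h - 2^k) (k+1)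
termination_by h
decreasing_by
  have : 0 < 2^k := Nat.pow_pos (by norm_num)
  omega

lemma grow_sum (h k : ℕ) : (grow h k).sum = h := by
  induction h using Nat.strong_induction_on generalizing k with
  | _ h ih =>
    rw [grow]
    split
    · simp; omega
    · split
      · simp
      · have h2 : 0 < 2^k := Nat.pow_pos (by norm_num)
        simp [ih (h - 2^k) (by omega) (k+1)]
        omega

def Slow : ℕ → List ℕ → Prop
  | _, [] => True
  | c, ℓ :: r => 1 ≤ ℓ ∧ ℓ ≤ c ∧ Slow (c + ℓ) r

lemma grow_slow (h k : ℕ) : Slow (2^k) (grow h k) := by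
  induction h using Nat.strong_induction_on generalizing k with
  | _ h ih =>
    rw [grow]
    split
    · trivial
    · split
      · refine ⟨by omega, by omega, trivial⟩
      · have h2 : 0 < 2^k := Nat.pow_pos (by norm_num)
        refine ⟨by omega, le_refl _, ?_⟩
        have := ih (h - 2^k) (by omega) (k+1)
        have e : 2^(k+1) = 2^k + 2^k := by ring
        rw [e] at this
        exact this

lemma grow_len : ∀ j h k, h + 2^k ≤ 2^(k+j) → (grow h k).length ≤ j := by
  intro j
  induction j with
  | zero =>
    intro h k hle
    have : h = 0 := by simp at hle; omega
    rw [grow]; simp [this]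
  | succ j ih =>
    intro h k hle
    rw [grow]
    split
    · simp
    · split
      · simp
      · have h2 : 0 < 2^k := Nat.pow_pos (by norm_num)
        simp only [List.length_cons]
        have : (grow (h - 2^k) (k+1)).length ≤ j := by
          apply ih
          have e : 2^(k+1) = 2^k + 2^k := by ring
          have e2 : 2^(k + (j+1)) = 2^((k+1)+j) := by ring_nf
          omega
        omega

def RSlowFrom : ℕ → List ℕ → Prop
  | _, [] => True
  | c, ℓ :: r => 1 ≤ ℓ ∧ ℓ ≤ r.sum + c ∧ RSlowFrom c r

lemma rslowFrom_append : ∀ (A : List ℕ) (c ℓ : ℕ), 1 ≤ ℓ → ℓ ≤ c →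
    RSlowFrom (c + ℓ) A → RSlowFrom c (A ++ [ℓ]) := by
  intro A
  induction A with
  | nil => intro c ℓ h1 h2 _; exact ⟨h1, by simp; omega, trivial⟩
  | cons x r ih =>
    intro c ℓ h1 h2 h
    obtain ⟨hx1, hx2, hr⟩ := h
    exact ⟨hx1, by simp at hx2 ⊢; omega, ih c ℓ h1 h2 hr⟩

lemma slow_reverse : ∀ (l : List ℕ) (c : ℕ), Slow c l → RSlowFrom c l.reverse := by
  intro l
  induction l with
  | nil => intro c _; trivial
  | cons ℓ r ih =>
    intro c h
    obtain ⟨h1, h2, h3⟩ := h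
    simpa using rslowFrom_append r.reverse c ℓ h1 h2 (ih (c + ℓ) h3)

def GoodAt (Γ' : Finset ℕ) (d : ℕ → ℕ) : ℕ → List ℕ → Prop
  | _, [] => True
  | b, ℓ :: r => (1 ≤ ℓ ∧ (b ∈ Γ' → ℓ = 1) ∧
      (b ∉ Γ' → ∀ p, b ≤ p → p < b + ℓ → ℓ ≤ d p)) ∧ GoodAt Γ' d (b + ℓ) r

lemma goodAt_append {Γ' : Finset ℕ} {d : ℕ → ℕ} :
    ∀ (l₁ l₂ : List ℕ) (b : ℕ), GoodAt Γ' d b l₁ → GoodAt Γ' d (b + l₁.sum) l₂ →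
    GoodAt Γ' d b (l₁ ++ l₂) := by
  intro l₁
  induction l₁ with
  | nil => intro l₂ b _ h; simpa using h
  | cons ℓ r ih =>
    intro l₂ b h1 h2
    obtain ⟨hh, hr⟩ := h1
    refine ⟨hh, ih l₂ (b + ℓ) hr ?_⟩
    simp only [List.sum_cons] at h2
    rw [show b + ℓ + r.sum = b + (ℓ + r.sum) by omega]
    exact h2

lemma good_left {Γ' : Finset ℕ} {d : ℕ → ℕ} (a a' : ℕ)
    (hd : ∀ p q, 1 ≤ q → a + q ≤ p → p + q ≤ a' → q ≤ d p)
    (hsep : ∀ g ∈ Γ', g ≤ a ∨ a' ≤ g) :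
    ∀ (X : List ℕ) (c e : ℕ), Slow c X → 1 ≤ c → c + X.sum ≤ e + 2 →
      a + c + X.sum + e = a' → GoodAt Γ' d (a + c) X := by
  intro X
  induction X with
  | nil => intro c e _ _ _ _; trivial
  | cons ℓ r ih =>
    intro c e hs hc hinv heq
    obtain ⟨h1, h2, h3⟩ := hs
    simp only [List.sum_cons] at hinv heq
    constructor
    · refine ⟨h1, ?_, ?_⟩
      · intro hmem
        rcases hsep _ hmem with h | h <;> omega
      · intro _ p hp1 hp2
        exact hd p ℓ h1 (by omega) (by omega)
    · have := ih (c + ℓ) e h3 (by omega) (by omega) (by omega)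
      rw [show a + c + ℓ = a + (c + ℓ) by omega]
      exact this

lemma good_right {Γ' : Finset ℕ} {d : ℕ → ℕ} (a a' : ℕ)
    (hd : ∀ p q, 1 ≤ q → a + q ≤ p → p + q ≤ a' → q ≤ d p)
    (hsep : ∀ g ∈ Γ', g ≤ a ∨ a' ≤ g) :
    ∀ (Y : List ℕ) (b : ℕ), RSlowFrom 1 Y → b + Y.sum = a' → a + Y.sum + 1 ≤ b →
      GoodAt Γ' d b Y := by
  intro Y
  induction Y with
  | nil => intro b _ _ _; trivial
  | cons ℓ r ih =>
    intro b hs heq hb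
    obtain ⟨h1, h2, h3⟩ := hs
    simp only [List.sum_cons] at heq hb
    constructor
    · refine ⟨h1, ?_, ?_⟩
      · intro hmem
        rcases hsep _ hmem with h | h <;> omega
      · intro _ p hp1 hp2
        exact hd p ℓ h1 (by omega) (by omega)
    · exact ih (b + ℓ) h3 (by omega) (by omega)

def gapLens (L : ℕ) : List ℕ :=
  1 :: (grow (L - L/2) 0 ++ (grow (L/2) 0).reverse)

lemma gapLens_sum (L : ℕ) : (gapLens L).sum = L + 1 := by
  simp [gapLens, List.sum_reverse, grow_sum]
  omega

lemma gapLens_length (L : ℕ) : (gapLens L).length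
    = (grow (L - L/2) 0).length + (grow (L/2) 0).length + 1 := by
  simp [gapLens]

lemma good_gap {Γ' : Finset ℕ} {d : ℕ → ℕ} (a L : ℕ) (ha : a ∈ Γ')
    (hd : ∀ p q, 1 ≤ q → a + q ≤ p → p + q ≤ a + L + 1 → q ≤ d p)
    (hsep : ∀ g ∈ Γ', g ≤ a ∨ a + L + 1 ≤ g) :
    GoodAt Γ' d a (gapLens L) := by
  refine ⟨⟨le_refl 1, fun _ => rfl, fun hna => absurd ha hna⟩, ?_⟩
  apply goodAt_append
  · have := good_left a (a + L + 1) hd hsep (grow (L - L/2) 0) 1 (L/2)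
      (by simpa using grow_slow (L - L/2) 0) (le_refl 1)
      (by rw [grow_sum]; omega) (by rw [grow_sum]; omega)
    simpa [Nat.add_comm] using this
  · rw [grow_sum]
    have := good_right a (a + L + 1) hd hsep (grow (L/2) 0).reverse (a + 1 + (L - L/2))
      (by simpa using slow_reverse (grow (L/2) 0) 1 (by simpa using grow_slow (L/2) 0))
      (by rw [List.sum_reverse, grow_sum]; omega)
      (by rw [List.sum_reverse, grow_sum]; omega)
    exact this

def build (n : ℕ) : List ℕ → List ℕ
  | [] => []
  | [a] => gapLens (n - a - 1)
  | a :: a' :: rest => gapLens (a' - a - 1) ++ build n (a' :: rest)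

lemma build_sum (n : ℕ) : ∀ (l : List ℕ) (a : ℕ), (a :: l).Pairwise (· < ·) →
    (∀ x ∈ a :: l, x < n) → (build n (a :: l)).sum + a = n := by
  intro l
  induction l with
  | nil =>
    intro a _ hlt
    have := hlt a (by simp)
    simp [build, gapLens_sum]
    omega
  | cons a' rest ih =>
    intro a hs hlt
    rw [List.pairwise_cons] at hs
    have haa' : a < a' := hs.1 a' (by simp)
    have h2 := ih a' hs.2 (fun x hx => hlt x (by simp at hx ⊢; tauto))
    simp only [build, List.sum_append, gapLens_sum]
    omega

lemma build_master (Γ' : Finset ℕ) (d : ℕ → ℕ) (n m K : ℕ)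
    (hΓlt : ∀ g ∈ Γ', g < n)
    (hanchor : ∀ p, p < n → ∃ e ∈ Γ', e ≤ p ∧ p + 1 ≤ e + m)
    (hdgen : ∀ p q, 1 ≤ q → (∀ g ∈ Γ', g + q ≤ p ∨ p + q ≤ g) → q ≤ d p)
    (hgrowlen : ∀ h ≤ m, (grow h 0).length ≤ K) :
    ∀ (l : List ℕ) (a : ℕ), (a :: l).Pairwise (· < ·) →
      (∀ x ∈ a :: l, x ∈ Γ') → (∀ x ∈ a :: l, x < n) →
      (∀ g ∈ Γ', g ∉ (a :: l) → g ≤ a) →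
      GoodAt Γ' d a (build n (a :: l)) ∧
        (build n (a :: l)).length ≤ (l.length + 1) * (2 * K + 1) := by
  intro l
  induction l with
  | nil =>
    intro a hsort hsub hlt hmax
    have han : a < n := hlt a (by simp)
    have hsep : ∀ g ∈ Γ', g ≤ a ∨ a + (n - a - 1) + 1 ≤ g := by
      intro g hg
      by_cases hgl : g ∈ [a]
      · simp at hgl; left; omega
      · left; exact hmax g hg hgl
    have hgap : n - a - 1 < m := by
      obtain ⟨e, heΓ, he1, he2⟩ := hanchor (n - 1) (by omega)
      rcases hsep e heΓ with h | h <;> omega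
    constructor
    · simp only [build]
      have := good_gap (Γ' := Γ') (d := d) a (n - a - 1) (hsub a (by simp))
        (fun p q h1 h2 h3 => hdgen p q h1 (fun g hg => by
          rcases hsep g hg with h | h
          · left; omega
          · right; omega))
        hsep
      exact this
    · simp only [build, gapLens_length, List.length_append, List.length_reverse,
        List.length, one_mul]
      have g1 := hgrowlen ((n - a - 1) - (n - a - 1)/2) (by omega)
      have g2 := hgrowlen ((n - a - 1)/2) (by omega)
      omega
  | cons a' rest ih =>
    intro a hsort hsub hlt hmax
    rw [List.pairwise_cons] at hsort
    have haa' : a < a' := hsort.1 a' (by simp)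
    have ha'rest : ∀ x ∈ rest, a' < x := fun x hx => by
      rcases hsort.2 with h
      rw [List.pairwise_cons] at h
      exact h.1 x hx
    have hsep : ∀ g ∈ Γ', g ≤ a ∨ a + (a' - a - 1) + 1 ≤ g := by
      intro g hg
      by_cases hgl : g ∈ (a :: a' :: rest)
      · simp at hgl
        rcases hgl with h | h | h
        · left; omega
        · right; omega
        · have := ha'rest g h; right; omega
      · left; exact hmax g hg hgl
    have hgap : a' - a - 1 < m := by
      obtain ⟨e, heΓ, he1, he2⟩ := hanchor (a' - 1) (by
        have := hlt a' (by simp); omega)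
      rcases hsep e heΓ with h | h <;> omega
    have hIH := ih a' hsort.2 (fun x hx => hsub x (by simp at hx ⊢; tauto))
      (fun x hx => hlt x (by simp at hx ⊢; tauto))
      (by
        intro g hg hgn
        by_cases hgl : g ∈ (a :: a' :: rest)
        · simp at hgl hgn
          rcases hgl with h | h | h
          · omega
          · exact absurd h hgn.1
          · exact absurd h hgn.2
        · have := hmax g hg hgl; omega)
    constructor
    · simp only [build]
      apply goodAt_append
      · exact good_gap (Γ' := Γ') (d := d) a (a' - a - 1) (hsub a (by simp))
          (fun p q h1 h2 h3 => hdgen p q h1 (fun g hg => by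
            rcases hsep g hg with h | h
            · left; omega
            · right; omega))
          hsep
      · rw [gapLens_sum, show a + (a' - a - 1 + 1) = a' by omega]
        exact hIH.1
    · simp only [build, List.append_eq, List.length_append, gapLens_length,
        List.length_reverse, List.length]
      have g1 := hgrowlen ((a' - a - 1) - (a' - a - 1)/2) (by omega)
      have g2 := hgrowlen ((a' - a - 1)/2) (by omega)
      have h2 := hIH.2
      have e : (rest.length + 1 + 1) * (2 * K + 1)
          = (2 * K + 1) + (rest.length + 1) * (2 * K + 1) := by ring
      omega

lemma sum_getD : ∀ (l : List ℕ), ∑ j ∈ Finset.range l.length, l.getD j 1 = l.sum := by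
  intro l
  induction l with
  | nil => simp
  | cons x r ih =>
    rw [List.length_cons, Finset.sum_range_succ']
    simp only [List.getD_cons_succ, List.getD_cons_zero, List.sum_cons]
    omega

lemma goodAt_index {Γ' : Finset ℕ} {d : ℕ → ℕ} :
    ∀ (l : List ℕ) (b : ℕ), GoodAt Γ' d b l → ∀ i, i < l.length →
      1 ≤ l.getD i 1 ∧
      ((b + ∑ j ∈ Finset.range i, l.getD j 1) ∈ Γ' → l.getD i 1 = 1) ∧
      ((b + ∑ j ∈ Finset.range i, l.getD j 1) ∉ Γ' →
        ∀ p, b + ∑ j ∈ Finset.range i, l.getD j 1 ≤ p →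
          p < b + (∑ j ∈ Finset.range i, l.getD j 1) + l.getD i 1 →
          l.getD i 1 ≤ d p) := by
  intro l
  induction l with
  | nil => intro b _ i hi; simp at hi
  | cons x r ih =>
    intro b hg i hi
    obtain ⟨⟨h1, h2, h3⟩, hrec⟩ := hg
    cases i with
    | zero =>
      simp only [Finset.range_zero, Finset.sum_empty, Nat.add_zero, List.getD_cons_zero]
      exact ⟨h1, h2, fun hn p hp1 hp2 => h3 hn p hp1 hp2⟩
    | succ i =>
      have hi' : i < r.length := by simp at hi; omega
      have := ih (b + x) hrec i hi'
      have hsum : ∀ t : ℕ, b + ∑ j ∈ Finset.range (i+1), (x :: r).getD j 1 + t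
          = (b + x) + (∑ j ∈ Finset.range i, r.getD j 1) + t := by
        intro t
        rw [Finset.sum_range_succ']
        simp only [List.getD_cons_succ, List.getD_cons_zero]
        omega
      have hsum0 : b + ∑ j ∈ Finset.range (i+1), (x :: r).getD j 1
          = (b + x) + ∑ j ∈ Finset.range i, r.getD j 1 := by
        have := hsum 0; omega
      rw [List.getD_cons_succ, hsum0]
      exact this

lemma exists_phrase (len : ℕ → ℕ) : ∀ z : ℕ, (∀ i < z, 1 ≤ len i) →
    ∀ p, p < ∑ j ∈ Finset.range z, len j →
    ∃ i, i < z ∧ (∑ j ∈ Finset.range i, len j) ≤ p ∧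
      p < (∑ j ∈ Finset.range i, len j) + len i := by
  intro z
  induction z with
  | zero => intro _ p hp; simp at hp
  | succ z ih =>
    intro hpos p hp
    rw [Finset.sum_range_succ] at hp
    by_cases h : p < ∑ j ∈ Finset.range z, len j
    · obtain ⟨i, hi, h1, h2⟩ := ih (fun i hi => hpos i (by omega)) p h
      exact ⟨i, by omega, h1, h2⟩
    · exact ⟨z, by omega, by omega, by omega⟩

end Stmt13Aux

open Stmt13Aux

/-- Given a string `T` of length `n` with a string attractor of size `γ`, there
is a valid bidirectional macro scheme of `T` of size `O(γ log(n/γ))`. -/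
theorem stmt13 : ∃ C : ℕ, 0 < C ∧ ∀ (α : Type) (S : List α) (Γ : Finset ℕ),
    IsAttractor S Γ →
    ∃ (z : ℕ) (len : ℕ → ℕ) (isExpl : ℕ → Prop) (src : ℕ → ℕ),
      IsBidirParse S z len isExpl src ∧
      z ≤ C * Γ.card * (Nat.log 2 (S.length / Γ.card) + 1) := by
  classical
  refine ⟨9, by norm_num, ?_⟩
  intro α S Γ hA
  by_cases hn : S.length = 0
  · refine ⟨0, fun _ => 1, fun _ => True, fun _ => 0, ⟨?_, ?_, ?_, ?_, ?_⟩, by omega⟩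
    · intro i hi; omega
    · simp [hn]
    · intro i hi; omega
    · intro i hi; omega
    · intro p hp; omega
  · obtain ⟨hΓlt, hattr⟩ := hA
    set n := S.length with hnn
    have hγpos : 0 < Γ.card := by
      obtain ⟨i', _, _, j, hj, _⟩ := hattr 0 n (by omega) (by omega)
      exact Finset.card_pos.2 ⟨j, hj⟩
    set γ := Γ.card with hγ
    set B := Nat.log 2 (n / γ) with hB
    set m := max 1 (n / γ) with hm
    have hm1 : 1 ≤ m := le_max_left _ _
    have hmB : m < 2^(B+1) := by
      rcases Nat.eq_zero_or_pos (n / γ) with h | h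
      · have hm0 : m = 1 := by omega
        rw [hm0]
        calc (1:ℕ) < 2 := by norm_num
          _ = 2^1 := by norm_num
          _ ≤ 2^(B+1) := Nat.pow_le_pow_right (by norm_num) (by omega)
      · have h2 : m = n / γ := by omega
        rw [h2, hB]
        exact Nat.lt_pow_succ_log_self (by norm_num) _
    set E := (Finset.range ((n-1)/m + 1)).image (· * m) with hE
    set Γ' := Γ ∪ E with hΓ'
    have h0E : 0 ∈ E := by
      rw [hE]
      exact Finset.mem_image.2 ⟨0, Finset.mem_range.2 (Nat.succ_pos _), by simp⟩
    have h0Γ' : (0:ℕ) ∈ Γ' := Finset.mem_union_right _ h0E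
    have hΓ'lt : ∀ g ∈ Γ', g < n := by
      intro g hg
      rcases Finset.mem_union.1 hg with h | h
      · exact hΓlt g h
      · rw [hE] at h
        obtain ⟨i, hi, rfl⟩ := Finset.mem_image.1 h
        rw [Finset.mem_range] at hi
        have h2 : i * m ≤ ((n-1)/m) * m := Nat.mul_le_mul (Nat.lt_succ_iff.mp hi) le_rfl
        have h3 : ((n-1)/m) * m ≤ n - 1 := Nat.div_mul_le_self _ _
        calc i * m ≤ n - 1 := h2.trans h3
          _ < n := by omega
    have hanchor : ∀ p, p < n → ∃ e ∈ Γ', e ≤ p ∧ p + 1 ≤ e + m := by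
      intro p hp
      refine ⟨(p/m) * m, Finset.mem_union_right _ ?_, Nat.div_mul_le_self _ _, ?_⟩
      · rw [hE]
        refine Finset.mem_image.2 ⟨p/m, Finset.mem_range.2 ?_, rfl⟩
        exact Nat.lt_succ_iff.mpr (Nat.div_le_div_right (show p ≤ n - 1 by omega))
      · have h1 : p < p / m * m + m := Nat.lt_div_mul_add (by omega)
        omega
    have hne : Γ'.Nonempty := ⟨0, h0Γ'⟩
    set d := fun p => Γ'.inf' hne (fun g => (g - p) + (p - g)) with hd
    have hdgen : ∀ p q, 1 ≤ q → (∀ g ∈ Γ', g + q ≤ p ∨ p + q ≤ g) → q ≤ d p := by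
      intro p q h1 h2
      rw [hd]
      apply Finset.le_inf'
      intro g hg
      rcases h2 g hg with h | h <;> omega
    have hdle : ∀ p g, g ∈ Γ' → d p ≤ (g - p) + (p - g) := by
      intro p g hg
      rw [hd]
      exact Finset.inf'_le _ hg
    have hgrowlen : ∀ h ≤ m, (grow h 0).length ≤ B + 1 := by
      intro h hh
      apply grow_len
      simp only [pow_zero, Nat.zero_add]
      omega
    set A := Γ'.sort (· ≤ ·) with hA'
    have hsortlt : A.Pairwise (· < ·) := List.sortedLT_iff_pairwise.1 Γ'.sortedLT_sort
    have hmemA : ∀ x, x ∈ A ↔ x ∈ Γ' := fun x => Finset.mem_sort _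
    obtain ⟨a0, Atail, hAeq⟩ : ∃ a0 t, A = a0 :: t := by
      cases hA2 : A with
      | nil =>
        exfalso
        have := (hmemA 0).2 h0Γ'
        rw [hA2] at this
        simp at this
      | cons a t => exact ⟨a, t, rfl⟩
    have ha00 : a0 = 0 := by
      have h0A : 0 ∈ A := (hmemA 0).2 h0Γ'
      rw [hAeq] at h0A hsortlt
      rw [List.pairwise_cons] at hsortlt
      rcases List.mem_cons.1 h0A with h | h
      · omega
      · have := hsortlt.1 0 h; omega
    rw [hAeq] at hsortlt hmemA
    have hmaster := build_master Γ' d n m (B+1) hΓ'lt hanchor hdgen hgrowlen Atail a0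
      hsortlt (fun x hx => (hmemA x).1 hx) (fun x hx => hΓ'lt x ((hmemA x).1 hx))
      (fun g hg hgn => absurd ((hmemA g).2 hg) hgn)
    have hbsum := build_sum n Atail a0 hsortlt (fun x hx => hΓ'lt x ((hmemA x).1 hx))
    set lens := build n (a0 :: Atail) with hlens
    set z := lens.length with hz
    set len := fun i => lens.getD i 1 with hlen
    have hGood : GoodAt Γ' d a0 lens := hmaster.1
    have hlenssum : lens.sum = n := by omega
    have hsum_len : ∑ j ∈ Finset.range z, len j = n := by
      rw [hz, hlen, sum_getD, hlenssum]
    have hfact : ∀ i, i < z → 1 ≤ len i ∧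
        ((∑ j ∈ Finset.range i, len j) ∈ Γ' → len i = 1) ∧
        ((∑ j ∈ Finset.range i, len j) ∉ Γ' → ∀ p, (∑ j ∈ Finset.range i, len j) ≤ p →
          p < (∑ j ∈ Finset.range i, len j) + len i → len i ≤ d p) := by
      intro i hi
      have := goodAt_index lens a0 hGood i hi
      rw [ha00] at this
      simp only [hlen]
      simpa using this
    have hstz : ∀ i, i < z → (∑ j ∈ Finset.range i, len j) + len i ≤ n := by
      intro i hi
      rw [← Finset.sum_range_succ, ← hsum_len]
      apply Finset.sum_le_sum_of_subset (Finset.range_subset_range.2 (by omega))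
    set src := fun i => if hc : (∑ j ∈ Finset.range i, len j) + len i ≤ n ∧ len i ≠ 0 then
        (hattr (∑ j ∈ Finset.range i, len j) (len i) hc.1 hc.2).choose else 0 with hsrc
    have hsrcspec : ∀ i, i < z → src i + len i ≤ n ∧
        (S.drop (src i)).take (len i) = (S.drop (∑ j ∈ Finset.range i, len j)).take (len i) ∧
        ∃ j ∈ Γ, src i ≤ j ∧ j < src i + len i := by
      intro i hi
      have hc : (∑ j ∈ Finset.range i, len j) + len i ≤ n ∧ len i ≠ 0 :=
        ⟨hstz i hi, by have := (hfact i hi).1; omega⟩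
      rw [hsrc]
      simp only [dif_pos hc]
      exact (hattr _ _ hc.1 hc.2).choose_spec
    refine ⟨z, len, fun i => (∑ j ∈ Finset.range i, len j) ∈ Γ', src, ⟨?_, hsum_len, ?_, ?_, ?_⟩, ?_⟩
    · exact fun i hi => (hfact i hi).1
    · exact fun i hi h => (hfact i hi).2.1 h
    · exact fun i hi _ => ⟨(hsrcspec i hi).1, (hsrcspec i hi).2.1⟩
    · -- Reach
      have key : ∀ D p, p < n → d p ≤ D →
          Reach z (fun i => ∑ j ∈ Finset.range i, len j) len
            (fun i => (∑ j ∈ Finset.range i, len j) ∈ Γ') src p := by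
        intro D
        induction D using Nat.strong_induction_on with
        | _ D ih =>
          intro p hp hdp
          obtain ⟨i, hi, h1, h2⟩ := exists_phrase len z (fun i hi => (hfact i hi).1) p
            (by rw [hsum_len]; exact hp)
          by_cases hex : (∑ j ∈ Finset.range i, len j) ∈ Γ'
          · exact Reach.expl p i hi h1 h2 hex
          · have hld : len i ≤ d p := (hfact i hi).2.2 hex p h1 h2
            obtain ⟨hs1, hs2, j, hjΓ, hj1, hj2⟩ := hsrcspec i hi
            have hlpos : 1 ≤ len i := (hfact i hi).1
            have hq : src i + (p - ∑ j ∈ Finset.range i, len j) < n := by omega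
            have hdq : d (src i + (p - ∑ j ∈ Finset.range i, len j)) < len i := by
              have := hdle (src i + (p - ∑ j ∈ Finset.range i, len j)) j
                (Finset.mem_union_left _ hjΓ)
              omega
            exact Reach.copy p i hi h1 h2 hex
              (ih (d (src i + (p - ∑ j ∈ Finset.range i, len j))) (by omega) _ hq le_rfl)
      exact fun p hp => key (d p) p hp le_rfl
    · -- bound
      have hcard : Atail.length + 1 = Γ'.card := by
        have := Γ'.length_sort (· ≤ ·)
        rw [← hA', hAeq] at this
        simpa using this
      have hcardE : E.card ≤ (n-1)/m + 1 := by
        rw [hE]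
        exact (Finset.card_image_le).trans (by simp)
      have hkey : n - 1 < 2 * γ * m := by
        rcases Nat.eq_zero_or_pos (n / γ) with h | h
        · have hm0 : m = 1 := by omega
          have : n < γ := by
            by_contra hc
            push_neg at hc
            have := (Nat.one_le_div_iff (show 0 < γ by omega)).mpr hc
            omega
          rw [hm0]
          have e1 : 2 * γ * 1 = γ + γ := by ring
          omega
        · have hmeq : m = n / γ := by omega
          have h1 := Nat.div_add_mod n γ
          have h2 : n % γ < γ := Nat.mod_lt _ (by omega)
          set P := γ * (n / γ) with hP
          have h3 : γ ≤ P := by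
            rw [hP]
            calc γ = γ * 1 := by ring
              _ ≤ γ * (n / γ) := Nat.mul_le_mul le_rfl h
          have h4 : 2 * γ * m = P + P := by rw [hP, hmeq]; ring
          omega
      have hdiv : (n-1)/m < 2*γ := by
        rw [Nat.div_lt_iff_lt_mul (show 0 < m by omega)]
        calc n - 1 < 2 * γ * m := hkey
          _ = 2 * γ * m := rfl
      have hΓ'card : Γ'.card ≤ 3 * γ := by
        have := Finset.card_union_le Γ E
        rw [← hΓ'] at this
        omega
      have hz3 : z ≤ (3 * γ) * (2 * (B+1) + 1) := by
        have h1 := hmaster.2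
        have h2 : (Atail.length + 1) * (2 * (B + 1) + 1) ≤ (3 * γ) * (2 * (B+1) + 1) :=
          Nat.mul_le_mul (by omega) le_rfl
        omega
      calc z ≤ (3 * γ) * (2 * (B+1) + 1) := hz3
        _ ≤ (3 * γ) * (3 * (B+1)) := Nat.mul_le_mul le_rfl (by omega)
        _ = 9 * γ * (B + 1) := by ring
end

section
/- For any string T of length n, the size g* of the smallest straight-line program generating T satisfies g* = O(b* log²(n/b*)), where b* is the size of the smallest macro scheme of T. -/
/-- A straight-line program: `g` rules `X_k → A_k B_k`. Its size is `g`. -/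
structure SLP (α : Type*) where
  g : ℕ
  rhs : Fin g → (Fin g ⊕ α) × (Fin g ⊕ α)
  lt₁ : ∀ k i, (rhs k).1 = Sum.inl i → (i : ℕ) < (k : ℕ)
  lt₂ : ∀ k i, (rhs k).2 = Sum.inl i → (i : ℕ) < (k : ℕ)
  exp : Fin g → List α
  exp_spec : ∀ k, exp k =
    (Sum.elim exp (fun a => [a]) (rhs k).1) ++ (Sum.elim exp (fun a => [a]) (rhs k).2)

/-- Expansion of a symbol (nonterminal or terminal). -/
def SLP.symExp {α : Type*} (P : SLP α) : Fin P.g ⊕ α → List α :=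
  Sum.elim P.exp (fun a => [a])



namespace Stmt15

variable {α : Type}

abbrev Sym (α : Type) := ℕ ⊕ α

def symE (E : List (List α)) : Sym α → List α
  | .inl j => E.getD j []
  | .inr a => [a]

def symH (H : List ℕ) : Sym α → ℕ
  | .inl j => H.getD j 0
  | .inr _ => 0

structure GB (α : Type) where
  R : List (Sym α × Sym α)
  E : List (List α)
  H : List ℕ
  hE : E.length = R.length
  hH : H.length = R.length
  ok : ∀ i (hi : i < R.length),
      (∀ j, (R.get ⟨i,hi⟩).1 = .inl j → j < i) ∧
      (∀ j, (R.get ⟨i,hi⟩).2 = .inl j → j < i) ∧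
      E.getD i [] = symE E (R.get ⟨i,hi⟩).1 ++ symE E (R.get ⟨i,hi⟩).2 ∧
      H.getD i 0 = max (symH H (R.get ⟨i,hi⟩).1) (symH H (R.get ⟨i,hi⟩).2) + 1

def WFs (G : GB α) (s : Sym α) : Prop := ∀ j, s = .inl j → j < G.R.length

def Ext (G G' : GB α) : Prop := G.R <+: G'.R ∧ G.E <+: G'.E ∧ G.H <+: G'.H

theorem Ext.refl (G : GB α) : Ext G G := ⟨List.prefix_refl _, List.prefix_refl _, List.prefix_refl _⟩

theorem Ext.trans {G₁ G₂ G₃ : GB α} (h : Ext G₁ G₂) (h' : Ext G₂ G₃) : Ext G₁ G₃ :=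
  ⟨h.1.trans h'.1, h.2.1.trans h'.2.1, h.2.2.trans h'.2.2⟩

theorem Ext.len {G G' : GB α} (h : Ext G G') : G.R.length ≤ G'.R.length := h.1.length_le

theorem Ext.wfs {G G' : GB α} (h : Ext G G') {s : Sym α} (hs : WFs G s) : WFs G' s :=
  fun j hj => lt_of_lt_of_le (hs j hj) h.len

theorem getD_prefix {β : Type*} {l l' : List β} (h : l <+: l') {n : ℕ} (hn : n < l.length) (d : β) :
    l'.getD n d = l.getD n d := by
  obtain ⟨t, rfl⟩ := h
  exact List.getD_append l t d n hn

theorem Ext.symE {G G' : GB α} (h : Ext G G') {s : Sym α} (hs : WFs G s) :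
    symE G'.E s = symE G.E s := by
  cases s with
  | inl j => exact getD_prefix h.2.1 (by rw [G.hE]; exact hs j rfl) []
  | inr a => rfl

theorem Ext.symH {G G' : GB α} (h : Ext G G') {s : Sym α} (hs : WFs G s) :
    symH G'.H s = symH G.H s := by
  cases s with
  | inl j => exact getD_prefix h.2.2 (by rw [G.hH]; exact hs j rfl) 0
  | inr a => rfl

/-- push a new rule -/
def push (G : GB α) (a b : Sym α) (ha : WFs G a) (hb : WFs G b) : GB α where
  R := G.R ++ [(a,b)]
  E := G.E ++ [symE G.E a ++ symE G.E b]
  H := G.H ++ [max (symH G.H a) (symH G.H b) + 1]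
  hE := by simp [G.hE]
  hH := by simp [G.hH]
  ok := by
    intro i hi
    have hEp : G.E <+: G.E ++ [symE G.E a ++ symE G.E b] := ⟨_, rfl⟩
    have hHp : G.H <+: G.H ++ [max (symH G.H a) (symH G.H b) + 1] := ⟨_, rfl⟩
    have hsymE : ∀ s : Sym α, WFs G s →
        symE (G.E ++ [symE G.E a ++ symE G.E b]) s = symE G.E s := by
      intro s hs; cases s with
      | inl j => exact getD_prefix hEp (by rw [G.hE]; exact hs j rfl) []
      | inr x => rfl
    have hsymH : ∀ s : Sym α, WFs G s →
        symH (G.H ++ [max (symH G.H a) (symH G.H b) + 1]) s = symH G.H s := by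
      intro s hs; cases s with
      | inl j => exact getD_prefix hHp (by rw [G.hH]; exact hs j rfl) 0
      | inr x => rfl
    rcases lt_or_ge i G.R.length with hlt | hge
    · have hget : (G.R ++ [(a,b)]).get ⟨i, hi⟩ = G.R.get ⟨i, hlt⟩ := by
        simp [List.getElem_append_left hlt]
      obtain ⟨o1, o2, o3, o4⟩ := G.ok i hlt
      have wf1 : WFs G (G.R.get ⟨i, hlt⟩).1 := fun j hj => lt_trans (o1 j hj) hlt
      have wf2 : WFs G (G.R.get ⟨i, hlt⟩).2 := fun j hj => lt_trans (o2 j hj) hlt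
      rw [hget]
      refine ⟨o1, o2, ?_, ?_⟩
      · rw [getD_prefix hEp (by rw [G.hE]; exact hlt) [], hsymE _ wf1, hsymE _ wf2]; exact o3
      · rw [getD_prefix hHp (by rw [G.hH]; exact hlt) 0, hsymH _ wf1, hsymH _ wf2]; exact o4
    · have hieq : i = G.R.length := by
        have := hi; simp at this; omega
      subst hieq
      have hget : (G.R ++ [(a,b)]).get ⟨G.R.length, hi⟩ = (a, b) := by
        simp
      rw [hget]
      refine ⟨fun j hj => ha j hj, fun j hj => hb j hj, ?_, ?_⟩
      · rw [hsymE _ ha, hsymE _ hb]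
        have : G.E.length = G.R.length := G.hE
        rw [List.getD_eq_getElem _ _ (by simp [this])]
        simp [this]
      · rw [hsymH _ ha, hsymH _ hb]
        have : G.H.length = G.R.length := G.hH
        rw [List.getD_eq_getElem _ _ (by simp [this])]
        simp [this]

theorem push_ext (G : GB α) (a b : Sym α) (ha hb) : Ext G (push G a b ha hb) :=
  ⟨⟨_, rfl⟩, ⟨_, rfl⟩, ⟨_, rfl⟩⟩

theorem push_len (G : GB α) (a b : Sym α) (ha hb) :
    (push G a b ha hb).R.length = G.R.length + 1 := by simp [push]

def newSym (G : GB α) : Sym α := .inl G.R.length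

theorem push_wfs (G : GB α) (a b : Sym α) (ha hb) :
    WFs (push G a b ha hb) (newSym G) := by
  intro j hj
  simp [newSym] at hj
  subst hj
  simp [push]

theorem push_symE (G : GB α) (a b : Sym α) (ha hb) :
    symE (push G a b ha hb).E (newSym G) = symE G.E a ++ symE G.E b := by
  have hlen : G.E.length = G.R.length := G.hE
  simp only [newSym, symE, push]
  rw [List.getD_eq_getElem _ _ (by simp [hlen])]
  simp [hlen]

theorem push_symH (G : GB α) (a b : Sym α) (ha hb) :
    symH (push G a b ha hb).H (newSym G) = max (symH G.H a) (symH G.H b) + 1 := by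
  have hlen : G.H.length = G.R.length := G.hH
  simp only [newSym, symH, push]
  rw [List.getD_eq_getElem _ _ (by simp [hlen])]
  simp [hlen]

theorem expNE (G : GB α) : ∀ j, j < G.R.length → G.E.getD j [] ≠ [] := by
  intro j
  induction j using Nat.strong_induction_on with
  | _ j ih =>
    intro hj
    obtain ⟨o1, o2, o3, _⟩ := G.ok j hj
    rw [o3]
    have h1 : symE G.E (G.R.get ⟨j, hj⟩).1 ≠ [] := by
      cases hs : (G.R.get ⟨j, hj⟩).1 with
      | inl j' => exact ih j' (o1 j' hs) (lt_trans (o1 j' hs) hj)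
      | inr a => simp [symE]
    intro hcon
    exact h1 (List.append_eq_nil_iff.mp hcon).1

theorem symE_ne (G : GB α) (s : Sym α) (hs : WFs G s) : symE G.E s ≠ [] := by
  cases s with
  | inl j => exact expNE G j (hs j rfl)
  | inr a => simp [symE]

theorem symE_pos (G : GB α) (s : Sym α) (hs : WFs G s) : 1 ≤ (symE G.E s).length :=
  Nat.one_le_iff_ne_zero.mpr (fun h => symE_ne G s hs (List.length_eq_zero_iff.mp h))

end Stmt15
namespace Stmt15
variable {α : Type}

theorem extractPrefix : ∀ (h : ℕ) (G : GB α) (s : Sym α), WFs G s → symH G.H s ≤ h →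
    ∀ m, 1 ≤ m → m ≤ (symE G.E s).length →
    ∃ (G' : GB α) (s' : Sym α), Ext G G' ∧ WFs G' s' ∧
      G'.R.length ≤ G.R.length + h ∧
      symE G'.E s' = (symE G.E s).take m ∧ symH G'.H s' ≤ symH G.H s := by
  intro h
  induction h with
  | zero =>
    intro G s hs hh m h1 h2
    by_cases hm : (symE G.E s).length ≤ m
    · exact ⟨G, s, Ext.refl G, hs, by omega, by rw [List.take_of_length_le hm], le_refl _⟩
    · exfalso
      cases s with
      | inr a => simp [symE] at hm; omega
      | inl j =>
        have hj : j < G.R.length := hs j rfl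
        obtain ⟨_, _, _, o4⟩ := G.ok j hj
        simp only [symH] at hh
        omega
  | succ h ih =>
    intro G s hs hh m h1 h2
    by_cases hm : (symE G.E s).length ≤ m
    · exact ⟨G, s, Ext.refl G, hs, by omega, by rw [List.take_of_length_le hm], le_refl _⟩
    cases s with
    | inr a => simp [symE] at hm; omega
    | inl j =>
      have hj : j < G.R.length := hs j rfl
      obtain ⟨o1, o2, o3, o4⟩ := G.ok j hj
      set a := (G.R.get ⟨j, hj⟩).1 with ha_def
      set b := (G.R.get ⟨j, hj⟩).2 with hb_def
      have wfa : WFs G a := fun j' hj' => lt_trans (o1 j' hj') hj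
      have wfb : WFs G b := fun j' hj' => lt_trans (o2 j' hj') hj
      have hsymE : symE G.E (Sum.inl j) = symE G.E a ++ symE G.E b := o3
      have hsymH : symH G.H (Sum.inl j : Sym α) = max (symH G.H a) (symH G.H b) + 1 := o4
      have hha : symH G.H a ≤ h := by omega
      have hhb : symH G.H b ≤ h := by omega
      by_cases hla : m ≤ (symE G.E a).length
      · obtain ⟨G', s', ext, wf', len', he', hh'⟩ := ih G a wfa hha m h1 hla
        refine ⟨G', s', ext, wf', by omega, ?_,
          le_trans hh' (by rw [hsymH]; exact le_trans (le_max_left _ _) (Nat.le_succ _))⟩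
        rw [he', hsymE, List.take_append,
          Nat.sub_eq_zero_of_le hla, List.take_zero, List.append_nil]
      · push_neg at hla
        have hlen : (symE G.E (Sum.inl j)).length
            = (symE G.E a).length + (symE G.E b).length := by
          rw [hsymE, List.length_append]
        obtain ⟨G₁, t, ext1, wft, len1, het, hht⟩ :=
          ih G b wfb hhb (m - (symE G.E a).length) (by omega) (by omega)
        have wfa1 : WFs G₁ a := ext1.wfs wfa
        refine ⟨push G₁ a t wfa1 wft, newSym G₁,
          ext1.trans (push_ext G₁ a t wfa1 wft), push_wfs G₁ a t wfa1 wft, ?_, ?_, ?_⟩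
        · rw [push_len]; omega
        · rw [push_symE, ext1.symE wfa, het, hsymE, List.take_append,
            List.take_of_length_le (le_of_lt hla)]
        · rw [push_symH, ext1.symH wfa, hsymH]
          exact Nat.succ_le_succ (max_le_max (le_refl _) hht)

theorem extractSuffix : ∀ (h : ℕ) (G : GB α) (s : Sym α), WFs G s → symH G.H s ≤ h →
    ∀ d, d < (symE G.E s).length →
    ∃ (G' : GB α) (s' : Sym α), Ext G G' ∧ WFs G' s' ∧
      G'.R.length ≤ G.R.length + h ∧
      symE G'.E s' = (symE G.E s).drop d ∧ symH G'.H s' ≤ symH G.H s := by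
  intro h
  induction h with
  | zero =>
    intro G s hs hh d hd
    by_cases hd0 : d = 0
    · exact ⟨G, s, Ext.refl G, hs, by omega, by rw [hd0, List.drop_zero], le_refl _⟩
    · exfalso
      cases s with
      | inr a => simp [symE] at hd; omega
      | inl j =>
        have hj : j < G.R.length := hs j rfl
        obtain ⟨_, _, _, o4⟩ := G.ok j hj
        simp only [symH] at hh
        omega
  | succ h ih =>
    intro G s hs hh d hd
    by_cases hd0 : d = 0
    · exact ⟨G, s, Ext.refl G, hs, by omega, by rw [hd0, List.drop_zero], le_refl _⟩
    cases s with
    | inr a => simp [symE] at hd; omega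
    | inl j =>
      have hj : j < G.R.length := hs j rfl
      obtain ⟨o1, o2, o3, o4⟩ := G.ok j hj
      set a := (G.R.get ⟨j, hj⟩).1 with ha_def
      set b := (G.R.get ⟨j, hj⟩).2 with hb_def
      have wfa : WFs G a := fun j' hj' => lt_trans (o1 j' hj') hj
      have wfb : WFs G b := fun j' hj' => lt_trans (o2 j' hj') hj
      have hsymE : symE G.E (Sum.inl j) = symE G.E a ++ symE G.E b := o3
      have hsymH : symH G.H (Sum.inl j : Sym α) = max (symH G.H a) (symH G.H b) + 1 := o4
      have hha : symH G.H a ≤ h := by omega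
      have hhb : symH G.H b ≤ h := by omega
      have hlen : (symE G.E (Sum.inl j)).length
          = (symE G.E a).length + (symE G.E b).length := by
        rw [hsymE, List.length_append]
      by_cases hla : d < (symE G.E a).length
      · obtain ⟨G₁, t, ext1, wft, len1, het, hht⟩ := ih G a wfa hha d hla
        have wfb1 : WFs G₁ b := ext1.wfs wfb
        refine ⟨push G₁ t b wft wfb1, newSym G₁,
          ext1.trans (push_ext G₁ t b wft wfb1), push_wfs G₁ t b wft wfb1, ?_, ?_, ?_⟩
        · rw [push_len]; omega
        · rw [push_symE, ext1.symE wfb, het, hsymE, List.drop_append,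
            Nat.sub_eq_zero_of_le (le_of_lt hla), List.drop_zero]
        · rw [push_symH, ext1.symH wfb, hsymH]
          exact Nat.succ_le_succ (max_le_max hht (le_refl _))
      · push_neg at hla
        obtain ⟨G₁, t, ext1, wft, len1, het, hht⟩ :=
          ih G b wfb hhb (d - (symE G.E a).length) (by omega)
        refine ⟨G₁, t, ext1, wft, by omega, ?_,
          le_trans hht (by rw [hsymH]; exact le_trans (le_max_right _ _) (Nat.le_succ _))⟩
        rw [het, hsymE, List.drop_append,
          List.drop_eq_nil_of_le hla, List.nil_append]

theorem extractSeg (G : GB α) (s : Sym α) (hs : WFs G s) (d m : ℕ) (h1 : 1 ≤ m)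
    (h2 : d + m ≤ (symE G.E s).length) :
    ∃ (G' : GB α) (s' : Sym α), Ext G G' ∧ WFs G' s' ∧
      G'.R.length ≤ G.R.length + 2 * symH G.H s ∧
      symE G'.E s' = ((symE G.E s).drop d).take m ∧ symH G'.H s' ≤ symH G.H s := by
  obtain ⟨G₁, s₁, ext1, wf1, len1, he1, hh1⟩ :=
    extractSuffix (symH G.H s) G s hs (le_refl _) d (by omega)
  obtain ⟨G₂, s₂, ext2, wf2, len2, he2, hh2⟩ :=
    extractPrefix (symH G.H s) G₁ s₁ wf1 (le_trans hh1 (le_refl _)) m h1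
      (by rw [he1, List.length_drop]; omega)
  exact ⟨G₂, s₂, ext1.trans ext2, wf2, by omega, by rw [he2, he1], by omega⟩

end Stmt15
namespace Stmt15
variable {α : Type}

def seg (S : List α) (x m : ℕ) : List α := (S.drop x).take m

theorem seg_length (S : List α) (x m : ℕ) (h : x + m ≤ S.length) :
    (seg S x m).length = m := by
  unfold seg
  rw [List.length_take, List.length_drop]
  omega

theorem seg_split (S : List α) (x m p : ℕ) (hp : p ≤ m) :
    seg S x m = seg S x p ++ seg S (x + p) (m - p) := by
  unfold seg
  rw [show m = p + (m - p) by omega, List.take_add, List.drop_drop]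
  congr 3
  omega

theorem seg_drop (S : List α) (x m d : ℕ) :
    (seg S x m).drop d = seg S (x + d) (m - d) := by
  unfold seg
  rw [List.drop_take, List.drop_drop]

theorem seg_take (S : List α) (x m p : ℕ) (hp : p ≤ m) :
    (seg S x m).take p = seg S x p := by
  unfold seg
  rw [List.take_take, min_eq_left hp]

theorem copy_seg (S : List α) (y z L : ℕ)
    (h : seg S y L = seg S z L) (d m : ℕ) (hdm : d + m ≤ L) :
    seg S (y + d) m = seg S (z + d) m := by
  have h1 := congrArg (fun l => (l.drop d).take m) h
  simpa [seg_drop, seg_take _ _ _ _ (by omega : m ≤ L - d)] using h1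

/-- the attractor property, by induction on `MSReach`. -/
theorem attractor (S : List α) (b₁ b₂ : ℕ) (tl tr src : Fin b₁ → ℕ) (q : Fin b₂ → ℕ)
    (hsrc : ∀ k, src k + (tr k - tl k) < S.length)
    (hcopy : ∀ k, (S.drop (src k)).take (tr k - tl k + 1)
          = (S.drop (tl k)).take (tr k - tl k + 1)) :
    ∀ x, MSReach tl tr src q x → ∀ m, 1 ≤ m → x + m ≤ S.length →
    ∃ x' t, ((∃ k, tr k = t) ∨ (∃ k, q k = t)) ∧ x' + m ≤ S.length ∧
      seg S x' m = seg S x m ∧ x' ≤ t ∧ t < x' + m := by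
  intro x hx
  induction hx with
  | base p k h =>
    intro m h1 h2
    exact ⟨p, q k, Or.inr ⟨k, rfl⟩, h2, rfl, ge_of_eq h, by omega⟩
  | step p k h1 h2 h ih =>
    intro m hm1 hm2
    by_cases hy : tr k < p + m
    · exact ⟨p, tr k, Or.inl ⟨k, rfl⟩, hm2, rfl, h2, hy⟩
    · push_neg at hy
      have hcs : seg S (src k) (tr k - tl k + 1) = seg S (tl k) (tr k - tl k + 1) :=
        hcopy k
      have heq : seg S (src k + (p - tl k)) m = seg S p m := by
        have := copy_seg S (src k) (tl k) (tr k - tl k + 1) hcs (p - tl k) m (by omega)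
        rwa [show tl k + (p - tl k) = p by omega] at this
      have hlen : src k + (p - tl k) + m ≤ S.length := by
        have := hsrc k
        omega
      obtain ⟨x', t, ht, hl, he, hle1, hle2⟩ := ih m hm1 hlen
      exact ⟨x', t, ht, hl, he.trans heq, hle1, hle2⟩

end Stmt15
namespace Stmt15
variable {α : Type}

def emptyGB (α : Type) : GB α :=
  ⟨[], [], [], rfl, rfl, by intro i hi; simp at hi⟩

def expO (E : List (List α)) : Option (Sym α) → List α
  | none => []
  | some s => symE E s

def WFo (G : GB α) : Option (Sym α) → Prop
  | none => True
  | some s => WFs G s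

def htO (H : List ℕ) : Option (Sym α) → ℕ
  | none => 0
  | some s => symH H s

theorem Ext.expO {G G' : GB α} (h : Ext G G') {o : Option (Sym α)} (ho : WFo G o) :
    expO G'.E o = expO G.E o := by
  cases o with
  | none => rfl
  | some s => exact h.symE ho

theorem Ext.htO {G G' : GB α} (h : Ext G G') {o : Option (Sym α)} (ho : WFo G o) :
    htO G'.H o = htO G.H o := by
  cases o with
  | none => rfl
  | some s => exact h.symH ho

theorem Ext.wfo {G G' : GB α} (h : Ext G G') {o : Option (Sym α)} (ho : WFo G o) :
    WFo G' o := by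
  cases o with
  | none => trivial
  | some s => exact h.wfs ho

theorem iterate {ι σ : Type} (default : σ) (P : GB α → ι → σ → Prop)
    (stable : ∀ G G' i s, Ext G G' → P G i s → P G' i s) (c : ℕ) :
    ∀ (xs : List ι) (G : GB α),
    (∀ i, i ∈ xs → ∀ G', Ext G G' →
      ∃ G'' s, Ext G' G'' ∧ G''.R.length ≤ G'.R.length + c ∧ P G'' i s) →
    ∃ (G' : GB α) (f : ι → σ), Ext G G' ∧
      G'.R.length ≤ G.R.length + xs.length * c ∧ ∀ i ∈ xs, P G' i (f i) := by
  intro xs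
  induction xs with
  | nil =>
    intro G _
    exact ⟨G, fun _ => default, Ext.refl G, by simp, by simp⟩
  | cons x xs ih =>
    intro G builder
    classical
    obtain ⟨G₁, s₁, ext₁, len₁, hP₁⟩ := builder x List.mem_cons_self G (Ext.refl G)
    obtain ⟨G₂, f, ext₂, len₂, hP₂⟩ := ih G₁
      (fun i hi G' hE => builder i (List.mem_cons_of_mem _ hi) G' (ext₁.trans hE))
    refine ⟨G₂, fun i => if i = x then s₁ else f i, ext₁.trans ext₂, ?_, ?_⟩
    · have : (x :: xs).length * c = xs.length * c + c := by
        simp [List.length_cons]; ring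
      omega
    · intro i hi
      by_cases h : i = x
      · subst h
        simp only [if_pos rfl]
        exact stable _ _ _ _ ext₂ hP₁
      · rcases List.mem_cons.mp hi with h' | h'
        · exact absurd h' h
        · simp only [if_neg h]
          exact hP₂ i h'

theorem seg_congr (S : List α) {a b a' b' : ℕ} (h1 : a = a') (h2 : b = b') :
    seg S a b = seg S a' b' := by rw [h1, h2]

section Levels

variable (S : List α) {γ : ℕ} (A : Fin γ → ℕ)

def Lexp (j : Fin γ) (ℓ : ℕ) : List α :=
  seg S (A j + 1 - min (2^ℓ) (A j + 1)) (min (2^ℓ) (A j + 1))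

def Rexp (j : Fin γ) (ℓ : ℕ) : List α :=
  seg S (A j + 1) (min (2^ℓ) (S.length - 1 - A j))

def LSpec (G : GB α) (j : Fin γ) (s : Sym α) (ℓ : ℕ) : Prop :=
  WFs G s ∧ symE G.E s = Lexp S A j ℓ ∧ symH G.H s ≤ 2*ℓ

def RSpec (G : GB α) (j : Fin γ) (o : Option (Sym α)) (ℓ : ℕ) : Prop :=
  WFo G o ∧ expO G.E o = Rexp S A j ℓ ∧ htO G.H o ≤ 2*ℓ

def HasLevel (G : GB α) (ℓ : ℕ) : Prop :=
  ∃ f : Fin γ → Sym α × Option (Sym α),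
    ∀ j, LSpec S A G j (f j).1 ℓ ∧ RSpec S A G j (f j).2 ℓ

theorem LSpec.ext {G G' : GB α} {j s ℓ} (h : Ext G G') (hs : LSpec S A G j s ℓ) :
    LSpec S A G' j s ℓ :=
  ⟨h.wfs hs.1, by rw [h.symE hs.1]; exact hs.2.1, by rw [h.symH hs.1]; exact hs.2.2⟩

theorem RSpec.ext {G G' : GB α} {j o ℓ} (h : Ext G G') (hs : RSpec S A G j o ℓ) :
    RSpec S A G' j o ℓ :=
  ⟨h.wfo hs.1, by rw [h.expO hs.1]; exact hs.2.1, by rw [h.htO hs.1]; exact hs.2.2⟩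

theorem HasLevel.ext {G G' : GB α} {ℓ} (h : Ext G G') (hs : HasLevel S A G ℓ) :
    HasLevel S A G' ℓ := by
  obtain ⟨f, hf⟩ := hs
  exact ⟨f, fun j => ⟨(hf j).1.ext S A h, (hf j).2.ext S A h⟩⟩

variable (hA : ∀ j, A j < S.length)
variable (hattr : ∀ x m, 1 ≤ m → x + m ≤ S.length →
    ∃ (x' : ℕ) (j : Fin γ), x' + m ≤ S.length ∧ seg S x' m = seg S x m ∧
      x' ≤ A j ∧ A j < x' + m)

include hA in
theorem hasLevel_zero (G : GB α) : HasLevel S A G 0 := by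
  refine ⟨fun j => (Sum.inr (S.get ⟨A j, hA j⟩),
    if h : A j + 1 < S.length then some (Sum.inr (S.get ⟨A j + 1, h⟩)) else none), ?_⟩
  intro j
  dsimp only
  have hseg1 : ∀ (x : ℕ) (hx : x < S.length), seg S x 1 = [S.get ⟨x, hx⟩] := by
    intro x hx
    rw [seg, List.drop_eq_getElem_cons hx, List.take_succ_cons, List.take_zero]
    rfl
  constructor
  · refine ⟨fun j' hj' => by simp at hj', ?_, by simp [symH]⟩
    have : Lexp S A j 0 = seg S (A j) 1 := by
      unfold Lexp
      exact seg_congr S (by omega) (by omega)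
    rw [this, hseg1 (A j) (hA j)]
    rfl
  · by_cases h : A j + 1 < S.length
    · rw [dif_pos h]
      refine ⟨fun j' hj' => by simp at hj', ?_, by simp [htO, symH]⟩
      have : Rexp S A j 0 = seg S (A j + 1) 1 := by
        unfold Rexp
        exact seg_congr S rfl (by omega)
      rw [this, hseg1 (A j + 1) h]
      rfl
    · rw [dif_neg h]
      refine ⟨trivial, ?_, by simp [htO]⟩
      have : Rexp S A j 0 = seg S (A j + 1) 0 := by
        unfold Rexp
        refine seg_congr S rfl (by have := hA j; omega)
      rw [this]
      simp [expO, seg]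

include hA hattr in
theorem window (G : GB α) (ℓ : ℕ) (hL : HasLevel S A G ℓ) :
    ∀ x m, 1 ≤ m → m ≤ 2^ℓ → x + m ≤ S.length →
    ∃ (G' : GB α) (s : Sym α), Ext G G' ∧ WFs G' s ∧
      G'.R.length ≤ G.R.length + (4*ℓ+1) ∧
      symE G'.E s = seg S x m ∧ symH G'.H s ≤ 2*ℓ+1 := by
  intro x m h1 h2 h3
  obtain ⟨x', j, hxm, heq, hle, hlt⟩ := hattr x m h1 h3
  obtain ⟨f, hf⟩ := hL
  obtain ⟨⟨wfL, heL, hhL⟩, ⟨wfR, heR, hhR⟩⟩ := hf j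
  set t := A j with ht_def
  have htn : t < S.length := hA j
  set p := t - x' + 1 with hp_def
  have hp1 : 1 ≤ p := by omega
  have hpm : p ≤ m := by omega
  set aℓ := min (2^ℓ) (t + 1) with haℓ_def
  have hpa : p ≤ aℓ := by
    have : p ≤ 2^ℓ := by omega
    omega
  have hLlen : (Lexp S A j ℓ).length = aℓ := by
    unfold Lexp
    rw [seg_length]
    omega
  -- extract suffix of L-symbol: the last p characters, i.e. seg S x' p
  obtain ⟨G₁, sL, ext1, wf1, len1, he1, hh1⟩ :=
    extractSuffix (2*ℓ) G (f j).1 wfL hhL (aℓ - p) (by rw [heL, hLlen]; omega)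
  have heL1 : symE G₁.E sL = seg S x' p := by
    rw [he1, heL]
    unfold Lexp
    rw [seg_drop]
    exact seg_congr S (by omega) (by omega)
  have hh1' : symH G₁.H sL ≤ 2*ℓ := le_trans hh1 hhL
  by_cases hr : m = p
  · refine ⟨G₁, sL, ext1, wf1, by omega, ?_, by omega⟩
    rw [heL1, ← heq, hr]
  · -- right part nonempty
    set r := m - p with hr_def
    have hr1 : 1 ≤ r := by omega
    set rℓ := min (2^ℓ) (S.length - 1 - t) with hrℓ_def
    have hrr : r ≤ rℓ := by
      have h5 : r ≤ 2^ℓ - 1 := by omega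
      have h6 : r ≤ S.length - 1 - t := by omega
      omega
    have hRlen : (Rexp S A j ℓ).length = rℓ := by
      unfold Rexp
      rw [seg_length]
      omega
    obtain ⟨sR, hsR⟩ : ∃ sR, (f j).2 = some sR := by
      cases ho : (f j).2 with
      | none =>
        exfalso
        rw [ho] at heR
        have : (Rexp S A j ℓ).length = 0 := by rw [← heR]; rfl
        omega
      | some sR => exact ⟨sR, rfl⟩
    rw [hsR] at wfR heR hhR
    have wfR1 : WFs G₁ sR := ext1.wfs wfR
    have heR1 : symE G₁.E sR = Rexp S A j ℓ := by rw [ext1.symE wfR]; exact heR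
    obtain ⟨G₂, sR', ext2, wf2, len2, he2, hh2⟩ :=
      extractPrefix (2*ℓ) G₁ sR wfR1 (by rw [ext1.symH wfR]; exact hhR) r hr1
        (by rw [heR1, hRlen]; omega)
    have heR2 : symE G₂.E sR' = seg S (t+1) r := by
      rw [he2, heR1]
      unfold Rexp
      rw [seg_take _ _ _ _ (by omega)]
    have wfL2 : WFs G₂ sL := ext2.wfs wf1
    refine ⟨push G₂ sL sR' wfL2 wf2, newSym G₂,
      (ext1.trans ext2).trans (push_ext _ _ _ _ _), push_wfs _ _ _ _ _, ?_, ?_, ?_⟩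
    · rw [push_len]; omega
    · rw [push_symE, ext2.symE wf1, heL1, heR2, ← heq,
        seg_split S x' m p hpm]
      congr 1
      exact seg_congr S (by omega) (by omega)
    · rw [push_symH, ext2.symH wf1]
      have e1 : symH G₂.H sR' ≤ 2*ℓ := le_trans hh2 (by rw [ext1.symH wfR]; exact hhR)
      omega

end Levels
end Stmt15
namespace Stmt15
variable {α : Type}

section Levels2

variable (S : List α) {γ : ℕ} (A : Fin γ → ℕ)
variable (hA : ∀ j, A j < S.length)
variable (hattr : ∀ x m, 1 ≤ m → x + m ≤ S.length →
    ∃ (x' : ℕ) (j : Fin γ), x' + m ≤ S.length ∧ seg S x' m = seg S x m ∧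
      x' ≤ A j ∧ A j < x' + m)

include hA hattr in
theorem levelStep (G : GB α) (ℓ : ℕ) (hL : HasLevel S A G ℓ) :
    ∃ G' : GB α, Ext G G' ∧ G'.R.length ≤ G.R.length + γ * (8*ℓ+4) ∧
      HasLevel S A G' (ℓ+1) := by
  have hstable : ∀ (G₁ G₂ : GB α) (j : Fin γ) (s : Sym α × Option (Sym α)), Ext G₁ G₂ →
      (LSpec S A G₁ j s.1 (ℓ+1) ∧ RSpec S A G₁ j s.2 (ℓ+1)) →
      (LSpec S A G₂ j s.1 (ℓ+1) ∧ RSpec S A G₂ j s.2 (ℓ+1)) :=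
    fun G₁ G₂ j s h hs => ⟨hs.1.ext S A h, hs.2.ext S A h⟩
  have h2pow : (2:ℕ)^(ℓ+1) = 2^ℓ + 2^ℓ := by rw [pow_succ]; ring
  obtain ⟨B, hB⟩ : ∃ B, (2:ℕ)^ℓ = B := ⟨_, rfl⟩
  rw [hB] at h2pow
  have builder : ∀ (j : Fin γ), j ∈ List.finRange γ → ∀ G₁, Ext G G₁ →
      ∃ (G₂ : GB α) (s : Sym α × Option (Sym α)), Ext G₁ G₂ ∧
        G₂.R.length ≤ G₁.R.length + (8*ℓ+4) ∧
        (LSpec S A G₂ j s.1 (ℓ+1) ∧ RSpec S A G₂ j s.2 (ℓ+1)) := by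
    intro j _ G₁ hext1
    have hL1 : HasLevel S A G₁ ℓ := hL.ext S A hext1
    have htn : A j < S.length := hA j
    -- L side
    have hLside : ∃ (G₂ : GB α) (sN : Sym α), Ext G₁ G₂ ∧
        G₂.R.length ≤ G₁.R.length + (4*ℓ+2) ∧ LSpec S A G₂ j sN (ℓ+1) := by
      obtain ⟨f, hf⟩ := id hL1
      obtain ⟨⟨wfL, heL, hhL⟩, -⟩ := hf j
      by_cases hp0 : min (B + B) (A j + 1) - min B (A j + 1) = 0
      · refine ⟨G₁, (f j).1, Ext.refl _, by omega, wfL, ?_, by omega⟩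
        rw [heL]
        unfold Lexp
        simp only [h2pow, hB]
        apply seg_congr S <;> omega
      · obtain ⟨G₂, sZ, ext2, wf2, len2, he2, hh2⟩ :=
          window S A hA hattr G₁ ℓ hL1
            (A j + 1 - min (B + B) (A j + 1))
            (min (B + B) (A j + 1) - min B (A j + 1))
            (by omega) (by rw [hB]; omega) (by omega)
        have wfL2 : WFs G₂ (f j).1 := ext2.wfs wfL
        refine ⟨push G₂ sZ (f j).1 wf2 wfL2, newSym G₂,
          ext2.trans (push_ext _ _ _ _ _), by rw [push_len]; omega,
          push_wfs _ _ _ _ _, ?_, ?_⟩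
        · rw [push_symE, he2, ext2.symE wfL, heL]
          have hsplit : Lexp S A j (ℓ+1) =
              seg S (A j + 1 - min (B + B) (A j + 1))
                (min (B + B) (A j + 1) - min B (A j + 1)) ++ Lexp S A j ℓ := by
            unfold Lexp
            simp only [h2pow, hB]
            rw [seg_split S (A j + 1 - min (B + B) (A j + 1)) (min (B + B) (A j + 1))
              (min (B + B) (A j + 1) - min B (A j + 1)) (by omega)]
            congr 1
            apply seg_congr S <;> omega
          rw [hsplit]
        · rw [push_symH, ext2.symH wfL]
          omega
    obtain ⟨G₂, sN, ext2, len2, hLS⟩ := hLside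
    have hL2 : HasLevel S A G₂ ℓ := hL1.ext S A ext2
    -- R side
    have hRside : ∃ (G₃ : GB α) (oN : Option (Sym α)), Ext G₂ G₃ ∧
        G₃.R.length ≤ G₂.R.length + (4*ℓ+2) ∧ RSpec S A G₃ j oN (ℓ+1) := by
      obtain ⟨f, hf⟩ := id hL2
      obtain ⟨-, ⟨wfR, heR, hhR⟩⟩ := hf j
      by_cases hp0 : min (B + B) (S.length - 1 - A j) - min B (S.length - 1 - A j) = 0
      · refine ⟨G₂, (f j).2, Ext.refl _, by omega, wfR, ?_, by omega⟩
        rw [heR]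
        unfold Rexp
        simp only [h2pow, hB]
        apply seg_congr S <;> omega
      · obtain ⟨G₃, sZ, ext3, wf3, len3, he3, hh3⟩ :=
          window S A hA hattr G₂ ℓ hL2
            (A j + 1 + min B (S.length - 1 - A j))
            (min (B + B) (S.length - 1 - A j) - min B (S.length - 1 - A j))
            (by omega) (by rw [hB]; omega) (by omega)
        have hsplit : Rexp S A j (ℓ+1) = Rexp S A j ℓ ++
            seg S (A j + 1 + min B (S.length - 1 - A j))
              (min (B + B) (S.length - 1 - A j) - min B (S.length - 1 - A j)) := by
          unfold Rexp
          simp only [h2pow, hB]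
          rw [seg_split S (A j + 1) (min (B + B) (S.length - 1 - A j))
            (min B (S.length - 1 - A j)) (by omega)]
        cases ho : (f j).2 with
        | none =>
          have hr0 : min B (S.length - 1 - A j) = 0 := by
            rw [ho] at heR
            have h9 : (Rexp S A j ℓ).length = 0 := by rw [← heR]; rfl
            unfold Rexp at h9
            simp only [hB] at h9
            rw [seg_length S _ _ (by omega)] at h9
            exact h9
          refine ⟨G₃, some sZ, ext3, by omega, wf3, ?_, ?_⟩
          · show symE G₃.E sZ = Rexp S A j (ℓ+1)
            rw [he3, hsplit, hr0]
            have h9 : Rexp S A j ℓ = [] := by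
              unfold Rexp
              simp only [hB]
              rw [hr0]
              simp [seg]
            rw [h9, List.nil_append]
          · show symH G₃.H sZ ≤ 2*(ℓ+1)
            omega
        | some sR =>
          rw [ho] at wfR heR hhR
          have wfRs : WFs G₂ sR := wfR
          have heR' : symE G₂.E sR = Rexp S A j ℓ := heR
          have hhR' : symH G₂.H sR ≤ 2*ℓ := hhR
          have wfR3 : WFs G₃ sR := ext3.wfs wfRs
          refine ⟨push G₃ sR sZ wfR3 wf3, some (newSym G₃),
            ext3.trans (push_ext _ _ _ _ _), by rw [push_len]; omega, push_wfs _ _ _ _ _,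
            ?_, ?_⟩
          · show symE (push G₃ sR sZ wfR3 wf3).E (newSym G₃) = Rexp S A j (ℓ+1)
            rw [push_symE, ext3.symE wfRs, heR', he3, hsplit]
          · show symH (push G₃ sR sZ wfR3 wf3).H (newSym G₃) ≤ 2*(ℓ+1)
            rw [push_symH, ext3.symH wfRs]
            omega
    obtain ⟨G₃, oN, ext3, len3, hRS⟩ := hRside
    exact ⟨G₃, (sN, oN), ext2.trans ext3, by omega, hLS.ext S A ext3, hRS⟩
  obtain ⟨G', f', ext', len', hP'⟩ := iterate (Sum.inl 0, none)
    (fun Gc j s => LSpec S A Gc j s.1 (ℓ+1) ∧ RSpec S A Gc j s.2 (ℓ+1)) hstable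
    (8*ℓ+4) (List.finRange γ) G builder
  refine ⟨G', ext', by simpa using len', ⟨f', fun j => hP' j (List.mem_finRange j)⟩⟩

include hA hattr in
theorem levels : ∀ Λ : ℕ, ∃ G : GB α, HasLevel S A G Λ ∧
    G.R.length ≤ γ * (4*Λ*Λ) := by
  intro Λ
  induction Λ with
  | zero => exact ⟨emptyGB α, hasLevel_zero S A hA _, by simp [emptyGB]⟩
  | succ ℓ ih =>
    obtain ⟨G, hL, hlen⟩ := ih
    obtain ⟨G', ext, len, hL'⟩ := levelStep S A hA hattr G ℓ hL
    refine ⟨G', hL', ?_⟩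
    have h4 : γ * (4*ℓ*ℓ) + γ * (8*ℓ+4) = γ * (4*(ℓ+1)*(ℓ+1)) := by ring
    omega

include hA hattr in
theorem top (Λ : ℕ) : ∀ (k : ℕ) (G : GB α), HasLevel S A G Λ →
    ∀ x m, 1 ≤ m → m ≤ 2^Λ * 2^k → x + m ≤ S.length →
    ∃ (G' : GB α) (s : Sym α), Ext G G' ∧ WFs G' s ∧
      G'.R.length ≤ G.R.length + (2^(k+1)-1)*(4*Λ+3) ∧ symE G'.E s = seg S x m := by
  intro k
  induction k with
  | zero =>
    intro G hL x m h1 h2 h3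
    rw [pow_zero, mul_one] at h2
    obtain ⟨G', s, ext, wf, len, he, -⟩ := window S A hA hattr G Λ hL x m h1 h2 h3
    refine ⟨G', s, ext, wf, ?_, he⟩
    have : (2:ℕ)^(0+1) = 2 := by norm_num
    omega
  | succ k ih =>
    intro G hL x m h1 h2 h3
    have hpk : (1:ℕ) ≤ 2^(k+1) := Nat.one_le_two_pow
    have hdbl : (2:ℕ)^(k+1+1) = 2^(k+1) + 2^(k+1) := by rw [pow_succ]; ring
    by_cases hm : m ≤ 2^Λ * 2^k
    · obtain ⟨G', s, ext, wf, len, he⟩ := ih G hL x m h1 hm h3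
      refine ⟨G', s, ext, wf, ?_, he⟩
      have hmono : (2^(k+1)-1)*(4*Λ+3) ≤ (2^(k+1+1)-1)*(4*Λ+3) :=
        Nat.mul_le_mul_right _ (by omega)
      omega
    · push_neg at hm
      have hsplit2 : (2:ℕ)^Λ * 2^(k+1) = 2^Λ * 2^k + 2^Λ * 2^k := by
        rw [pow_succ]; ring
      have hm1pos : 1 ≤ 2^Λ * 2^k :=
        Nat.mul_pos (Nat.pow_pos (by norm_num)) (Nat.pow_pos (by norm_num))
      obtain ⟨G₁, s₁, ext1, wf1, len1, he1⟩ := ih G hL x (2^Λ * 2^k) (by omega)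
        (le_refl _) (by omega)
      have hL1 : HasLevel S A G₁ Λ := hL.ext S A ext1
      obtain ⟨G₂, s₂, ext2, wf2, len2, he2⟩ := ih G₁ hL1 (x + 2^Λ * 2^k)
        (m - 2^Λ * 2^k) (by omega) (by omega) (by omega)
      have wf12 : WFs G₂ s₁ := ext2.wfs wf1
      refine ⟨push G₂ s₁ s₂ wf12 wf2, newSym G₂,
        (ext1.trans ext2).trans (push_ext _ _ _ _ _), push_wfs _ _ _ _ _, ?_, ?_⟩
      · rw [push_len]
        have hkey : (2^(k+1+1)-1)*(4*Λ+3) =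
            (2^(k+1)-1)*(4*Λ+3) + (2^(k+1)-1)*(4*Λ+3) + (4*Λ+3) := by
          have h9 : 2^(k+1+1)-1 = (2^(k+1)-1) + (2^(k+1)-1) + 1 := by omega
          rw [h9]; ring
        omega
      · rw [push_symE, ext2.symE wf1, he1, he2,
          ← seg_split S x m (2^Λ * 2^k) (by omega)]

end Levels2
end Stmt15
namespace Stmt15
variable {α : Type}

def cvSym (g : ℕ) (s : Sym α) (hs : ∀ j, s = Sum.inl j → j < g) : Fin g ⊕ α :=
  match s, hs with
  | .inl j, hs => .inl ⟨j, hs j rfl⟩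
  | .inr a, _ => .inr a

theorem cvSym_inl {g : ℕ} {s : Sym α} {hs} {i : Fin g} (h : cvSym g s hs = Sum.inl i) :
    s = Sum.inl (i : ℕ) := by
  cases s with
  | inl j =>
    simp only [cvSym] at h
    rcases h with h
    injection h with h'
    rw [← h']
  | inr a => simp [cvSym] at h

def toSLP (G : GB α) : SLP α where
  g := G.R.length
  rhs := fun k =>
    (cvSym G.R.length (G.R.get ⟨k.1, k.2⟩).1
        (fun j hj => lt_trans ((G.ok k.1 k.2).1 j hj) k.2),
     cvSym G.R.length (G.R.get ⟨k.1, k.2⟩).2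
        (fun j hj => lt_trans ((G.ok k.1 k.2).2.1 j hj) k.2))
  lt₁ := by
    intro k i h
    have h2 := cvSym_inl h
    exact (G.ok k.1 k.2).1 _ h2
  lt₂ := by
    intro k i h
    have h2 := cvSym_inl h
    exact (G.ok k.1 k.2).2.1 _ h2
  exp := fun k => G.E.getD k.1 []
  exp_spec := by
    intro k
    have key : ∀ (s : Sym α) (hs : ∀ j, s = Sum.inl j → j < G.R.length),
        Sum.elim (fun k : Fin G.R.length => G.E.getD k.1 []) (fun a => [a])
          (cvSym G.R.length s hs) = symE G.E s := by
      intro s hs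
      cases s with
      | inl j => rfl
      | inr a => rfl
    rw [key, key]
    exact (G.ok k.1 k.2).2.2.1

theorem toSLP_symExp (G : GB α) (s : Sym α) (hs : WFs G s) :
    (toSLP G).symExp (cvSym G.R.length s hs) = symE G.E s := by
  cases s with
  | inl j => rfl
  | inr a => rfl

theorem toSLP_g (G : GB α) : (toSLP G).g = G.R.length := rfl

theorem attrIndex (S : List α) (b₁ b₂ : ℕ) (tl tr src : Fin b₁ → ℕ) (q : Fin b₂ → ℕ)
    (htr : ∀ k, tr k < S.length)
    (hsrc : ∀ k, src k + (tr k - tl k) < S.length)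
    (hcopy : ∀ k, (S.drop (src k)).take (tr k - tl k + 1)
          = (S.drop (tl k)).take (tr k - tl k + 1))
    (hq : ∀ k, q k < S.length)
    (hreach : ∀ p < S.length, MSReach tl tr src q p) :
    ∃ A : Fin (b₁+b₂) → ℕ, (∀ j, A j < S.length) ∧
      (∀ x m, 1 ≤ m → x + m ≤ S.length →
        ∃ (x' : ℕ) (j : Fin (b₁+b₂)), x' + m ≤ S.length ∧ seg S x' m = seg S x m ∧
          x' ≤ A j ∧ A j < x' + m) := by
  refine ⟨fun j => if h : (j:ℕ) < b₁ then tr ⟨j, h⟩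
    else q ⟨(j:ℕ) - b₁, by have := j.isLt; omega⟩, ?_, ?_⟩
  · intro j
    by_cases h : (j:ℕ) < b₁
    · simp only [dif_pos h]; exact htr _
    · simp only [dif_neg h]; exact hq _
  · intro x m h1 h2
    have hre : MSReach tl tr src q x := hreach x (by omega)
    obtain ⟨x', t, hset, hl, he, hle1, hle2⟩ :=
      attractor S b₁ b₂ tl tr src q hsrc hcopy x hre m h1 h2
    rcases hset with ⟨k, hk⟩ | ⟨k, hk⟩
    · refine ⟨x', ⟨(k:ℕ), by have := k.isLt; omega⟩, hl, he, ?_, ?_⟩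
      · simp only [dif_pos k.isLt]
        rw [show (⟨(k:ℕ), k.isLt⟩ : Fin b₁) = k from rfl, hk]
        exact hle1
      · simp only [dif_pos k.isLt]
        rw [show (⟨(k:ℕ), k.isLt⟩ : Fin b₁) = k from rfl, hk]
        exact hle2
    · refine ⟨x', ⟨b₁ + (k:ℕ), by have := k.isLt; omega⟩, hl, he, ?_, ?_⟩
      · simp only [dif_neg (by omega : ¬ b₁ + (k:ℕ) < b₁)]
        rw [show (⟨b₁ + (k:ℕ) - b₁, by have := k.isLt; omega⟩ : Fin b₂) = k from
          Fin.ext (by show b₁ + (k:ℕ) - b₁ = (k:ℕ); omega), hk]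
        exact hle1
      · simp only [dif_neg (by omega : ¬ b₁ + (k:ℕ) < b₁)]
        rw [show (⟨b₁ + (k:ℕ) - b₁, by have := k.isLt; omega⟩ : Fin b₂) = k from
          Fin.ext (by show b₁ + (k:ℕ) - b₁ = (k:ℕ); omega), hk]
        exact hle2

theorem main (S : List α) (hS : S ≠ [])
    (b₁ b₂ : ℕ) (tl tr src : Fin b₁ → ℕ) (q : Fin b₂ → ℕ) (c : Fin b₂ → α)
    (hts : ∀ k, tl k ≤ tr k) (htr : ∀ k, tr k < S.length)
    (hsrc : ∀ k, src k + (tr k - tl k) < S.length)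
    (hcopy : ∀ k, (S.drop (src k)).take (tr k - tl k + 1)
          = (S.drop (tl k)).take (tr k - tl k + 1))
    (hq : ∀ k, q k < S.length) (hc : ∀ k, S[q k]? = some (c k))
    (hreach : ∀ p < S.length, MSReach tl tr src q p) :
    ∃ (P : SLP α) (s : Fin P.g ⊕ α), P.symExp s = S ∧
      P.g ≤ 32 * (b₁ + b₂) * (Nat.log 2 (S.length / (b₁ + b₂)) + 1) ^ 2 := by
  have hn : 1 ≤ S.length := List.length_pos_iff.mpr hS
  have hb2 : 0 < b₂ := by
    have haux : ∀ p, MSReach tl tr src q p → 0 < b₂ := by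
      intro p h0
      induction h0 with
      | base p k h => exact k.pos
      | step p k h1 h2 h ih => exact ih
    exact haux 0 (hreach 0 (by omega))
  obtain ⟨A, hA, hattr⟩ := attrIndex S b₁ b₂ tl tr src q htr hsrc hcopy hq hreach
  obtain ⟨b, hbdef⟩ : ∃ x, b₁ + b₂ = x := ⟨_, rfl⟩
  have hb : 1 ≤ b := by omega
  obtain ⟨L, hLdef⟩ : ∃ x, Nat.log 2 (S.length / b) + 1 = x := ⟨_, rfl⟩
  obtain ⟨K, hKdef⟩ : ∃ x, Nat.log 2 b + 1 = x := ⟨_, rfl⟩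
  have hΛpos : 1 ≤ L := by omega
  have hΛbound : S.length / b < 2^L := by
    rw [← hLdef]
    exact Nat.lt_pow_succ_log_self (by norm_num) _
  have hKbound : b < 2^K := by
    rw [← hKdef]
    exact Nat.lt_pow_succ_log_self (by norm_num) _
  have hK2 : 2^K ≤ 2*b := by
    rw [← hKdef, pow_succ]
    have := Nat.pow_log_le_self 2 (by omega : b ≠ 0)
    omega
  have hnm : S.length ≤ 2^L * 2^K := by
    have hmod : S.length % b < b := Nat.mod_lt _ (by omega)
    have hdm : b * (S.length / b) + S.length % b = S.length := Nat.div_add_mod S.length b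
    have hlt : S.length < b * (S.length / b + 1) := by
      have h9 : b * (S.length / b + 1) = b * (S.length / b) + b := by ring
      omega
    have hle : b * (S.length / b + 1) ≤ 2^K * 2^L :=
      Nat.mul_le_mul (le_of_lt hKbound) (by omega)
    have h9 : 2^K * 2^L = 2^L * 2^K := by ring
    omega
  obtain ⟨G₀, hL0, hlen0⟩ := levels S A hA hattr L
  rw [hbdef] at hlen0
  obtain ⟨G₁, s₁, ext1, wf1, len1, he1⟩ :=
    top S A hA hattr L K G₀ hL0 0 S.length hn hnm (by omega)
  refine ⟨toSLP G₁, cvSym G₁.R.length s₁ wf1, ?_, ?_⟩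
  · rw [toSLP_symExp]
    rw [he1]
    unfold seg
    rw [List.drop_zero]
    exact List.take_of_length_le (le_refl _)
  · have hg : (toSLP G₁).g = G₁.R.length := rfl
    rw [hg, hbdef, hLdef]
    have h2K1 : 2^(K+1) ≤ 4*b := by
      rw [pow_succ]
      omega
    have htop : (2^(K+1)-1)*(4*L+3) ≤ (4*b)*(4*L+3) :=
      Nat.mul_le_mul_right _ (by omega)
    have hexp : (4*b)*(4*L+3) = 16*(b*L) + 12*b := by ring
    have hbig : b * (4*L*L) = 4*(b*(L*L)) := by ring
    have e1 : L ≤ L*L := Nat.le_mul_of_pos_left L hΛpos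
    have e2 : 1 ≤ L*L := by
      have := Nat.mul_le_mul hΛpos hΛpos
      omega
    have e3 : b*L ≤ b*(L*L) := Nat.mul_le_mul_left b e1
    have e4 : b ≤ b*(L*L) := by
      calc b = b * 1 := by ring
      _ ≤ b * (L*L) := Nat.mul_le_mul_left b e2
    have hfin : 32 * b * L^2 = 32*(b*(L*L)) := by ring
    rw [hfin]
    omega

theorem stmt15' : ∃ C : ℕ, 0 < C ∧ ∀ (α : Type) (S : List α), S ≠ [] →
    ∀ (b₁ b₂ : ℕ) (tl tr src : Fin b₁ → ℕ) (q : Fin b₂ → ℕ) (c : Fin b₂ → α),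
    (∀ k, tl k ≤ tr k) → (∀ k, tr k < S.length) →
    (∀ k, src k + (tr k - tl k) < S.length) →
    (∀ k, (S.drop (src k)).take (tr k - tl k + 1)
          = (S.drop (tl k)).take (tr k - tl k + 1)) →
    (∀ k, q k < S.length) → (∀ k, S[q k]? = some (c k)) →
    (∀ p < S.length, MSReach tl tr src q p) →
    ∃ (P : SLP α) (s : Fin P.g ⊕ α), P.symExp s = S ∧
      P.g ≤ C * (b₁ + b₂) * (Nat.log 2 (S.length / (b₁ + b₂)) + 1) ^ 2 := by
  refine ⟨32, by norm_num, ?_⟩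
  intro α S hS b₁ b₂ tl tr src q c hts htr hsrc hcopy hq hc hreach
  exact main S hS b₁ b₂ tl tr src q c hts htr hsrc hcopy hq hc hreach

end Stmt15

/-- For any nonempty string `T` of length `n` and any macro scheme of `T` of
size `b = b₁ + b₂` (in particular the smallest one, of size `b*`), there is an
SLP generating exactly `T` of size `O(b log²(n/b))`; hence
`g* = O(b* log²(n/b*))`. -/
theorem stmt15 : ∃ C : ℕ, 0 < C ∧ ∀ (α : Type) (S : List α), S ≠ [] →
    ∀ (b₁ b₂ : ℕ) (tl tr src : Fin b₁ → ℕ) (q : Fin b₂ → ℕ) (c : Fin b₂ → α),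
    (∀ k, tl k ≤ tr k) → (∀ k, tr k < S.length) →
    (∀ k, src k + (tr k - tl k) < S.length) →
    (∀ k, (S.drop (src k)).take (tr k - tl k + 1)
          = (S.drop (tl k)).take (tr k - tl k + 1)) →
    (∀ k, q k < S.length) → (∀ k, S[q k]? = some (c k)) →
    (∀ p < S.length, MSReach tl tr src q p) →
    ∃ (P : SLP α) (s : Fin P.g ⊕ α), P.symExp s = S ∧
      P.g ≤ C * (b₁ + b₂) * (Nat.log 2 (S.length / (b₁ + b₂)) + 1) ^ 2 := by
  refine ⟨32, by norm_num, ?_⟩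
  intro α S hS b₁ b₂ tl tr src q c hts htr hsrc hcopy hq hc hreach
  exact Stmt15.main S hS b₁ b₂ tl tr src q c hts htr hsrc hcopy hq hc hreach
end
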